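/- arXiv:2111.05580 — 11 statements merged into one kernel-verified Lean document; each statement's English description precedes it below -/
import Mathlib

section
/- There exists c > 0 such that for all z ∈ ℂ with z ≠ 0 and |Im(z)| ≤ 1, one has ‖ẽ_z‖_{L²(0,ℓ)} ≤ c/|z|. -/
open Complex

/-! The factor `e^{izx} - e^{2izℓ} e^{-izx}` equals `e^{izx} - e^{iz(2ℓ - x)}`, and for
`|Im z| ≤ 1` both exponentials have modulus at most `e^{2ℓ}` on `[0, ℓ]`. Hence
`|ẽ_z(x)| ≤ ℓ e^{2ℓ} / |z|` pointwise, and integrating the square over an interval of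
length `ℓ` gives `‖ẽ_z‖_{L²} ≤ √ℓ · ℓ e^{2ℓ} / |z|`. -/

theorem sqrt_intervalIntegral_norm_sq_le {E : Type*} [NormedAddCommGroup E] {f : ℝ → E}
    {a b M : ℝ} (hM0 : 0 ≤ M) (hM : ∀ x ∈ Set.uIoc a b, ‖f x‖ ≤ M) :
    √(∫ x in a..b, ‖f x‖ ^ 2) ≤ √|b - a| * M := by
  have hsq : ∀ x ∈ Set.uIoc a b, ‖‖f x‖ ^ 2‖ ≤ M ^ 2 := fun x hx => by
    rw [norm_pow, norm_norm]
    exact pow_le_pow_left₀ (norm_nonneg _) (hM x hx) 2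
  calc √(∫ x in a..b, ‖f x‖ ^ 2)
      ≤ √(M ^ 2 * |b - a|) :=
        Real.sqrt_le_sqrt <| (le_abs_self _).trans <|
          intervalIntegral.norm_integral_le_of_norm_le_const hsq
    _ = √|b - a| * M := by
        rw [mul_comm, Real.sqrt_mul (abs_nonneg _), Real.sqrt_sq hM0]

theorem norm_cexp_I_mul_ofReal_le (w : ℂ) (t : ℝ) :
    ‖exp (I * w * t)‖ ≤ Real.exp (|w.im| * |t|) := by
  rw [norm_exp, Real.exp_le_exp, ← abs_mul]
  have hre : (I * w * t).re = -(w.im * t) := by simp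
  exact hre ▸ neg_le_abs _

theorem norm_cexp_sub_cexp_reflect_le {ℓ x : ℝ} {z : ℂ} (hz : |z.im| ≤ 1)
    (hx : x ∈ Set.Icc 0 ℓ) :
    ‖exp (I * z * x) - exp (2 * I * z * ℓ) * exp (-(I * z * x))‖ ≤ 2 * Real.exp (2 * ℓ) := by
  obtain ⟨hx0, hxℓ⟩ := hx
  have hreflect : exp (2 * I * z * ℓ) * exp (-(I * z * x)) = exp (I * z * ↑(2 * ℓ - x)) := by
    rw [← Complex.exp_add]
    push_cast
    ring_nf
  have hexp_le {t : ℝ} (ht0 : 0 ≤ t) (ht : t ≤ 2 * ℓ) :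
      ‖exp (I * z * t)‖ ≤ Real.exp (2 * ℓ) := by
    refine (norm_cexp_I_mul_ofReal_le z t).trans (Real.exp_le_exp.mpr ?_)
    rw [abs_of_nonneg ht0]
    nlinarith [abs_nonneg z.im]
  calc _ ≤ ‖exp (I * z * x)‖ + ‖exp (I * z * ↑(2 * ℓ - x))‖ := hreflect ▸ norm_sub_le _ _
    _ ≤ 2 * Real.exp (2 * ℓ) := by
        linarith [hexp_le hx0 (by linarith), hexp_le (t := 2 * ℓ - x) (by linarith) (by linarith)]

theorem norm_tilde_ez_apply_le {ℓ x : ℝ} {z : ℂ} (hz : |z.im| ≤ 1) (hx : x ∈ Set.Icc 0 ℓ) :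
    ‖(1 / (2 * I * z)) * ((ℓ : ℂ) - x)
        * (exp (I * z * x) - exp (2 * I * z * ℓ) * exp (-(I * z * x)))‖
      ≤ ℓ * Real.exp (2 * ℓ) / ‖z‖ := by
  have hfactor : ‖(1 / (2 * I * z))‖ = 1 / (2 * ‖z‖) := by simp
  have hweight : ‖(ℓ : ℂ) - x‖ ≤ ℓ := by
    rw [← ofReal_sub, norm_real, Real.norm_of_nonneg (sub_nonneg.mpr hx.2)]
    linarith [hx.1]
  rw [norm_mul, norm_mul, hfactor]
  calc 1 / (2 * ‖z‖) * ‖(ℓ : ℂ) - x‖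
        * ‖exp (I * z * x) - exp (2 * I * z * ℓ) * exp (-(I * z * x))‖
      ≤ 1 / (2 * ‖z‖) * ℓ * (2 * Real.exp (2 * ℓ)) := by
        gcongr
        · exact mul_nonneg (by positivity) (hx.1.trans hx.2)
        · exact norm_cexp_sub_cexp_reflect_le hz hx
    _ = ℓ * Real.exp (2 * ℓ) / ‖z‖ := by ring

/-- There is `c > 0` such that for all `z ≠ 0` with `|Im z| ≤ 1` one has
`‖ẽ_z‖_{L²(0,ℓ)} ≤ c / |z|`. -/
theorem norm_tilde_ez (ℓ : ℝ) (hℓ : 0 < ℓ)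
    (ez' : ℂ → ℝ → ℂ)
    (hez' : ez' = fun (w : ℂ) (x : ℝ) =>
      (1 / (2 * I * w)) * ((ℓ : ℂ) - x)
        * (exp (I * w * x) - exp (2 * I * w * ℓ) * exp (-(I * w * x)))) :
    ∃ c > 0, ∀ z : ℂ, z ≠ 0 → |z.im| ≤ 1 →
      Real.sqrt (∫ x in (0:ℝ)..ℓ, ‖ez' z x‖ ^ 2) ≤ c / ‖z‖ := by
  subst hez'
  refine ⟨√ℓ * (ℓ * Real.exp (2 * ℓ)), by positivity, fun z _ hz => ?_⟩
  have hbound : ∀ x ∈ Set.uIoc 0 ℓ, _ := fun x hx =>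
    norm_tilde_ez_apply_le hz (Set.Ioc_subset_Icc_self (Set.uIoc_of_le hℓ.le ▸ hx))
  calc _ ≤ √|ℓ - 0| * (ℓ * Real.exp (2 * ℓ) / ‖z‖) :=
        sqrt_intervalIntegral_norm_sq_le (by positivity) hbound
    _ = √ℓ * (ℓ * Real.exp (2 * ℓ)) / ‖z‖ := by
        rw [sub_zero, abs_of_pos hℓ]
        ring
end

section
/- If a² ≠ 4b², then the functions φ₋ and φ₊ have no common zero in ℂ. That is, there is no z ∈ ℂ with (z − μ₋)e^{2izℓ} = z + μ₋ and (z − μ₊)e^{2izℓ} = z + μ₊. -/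
open Complex

/-- If `a² ≠ 4b²` then `φ₋` and `φ₊` have no common zero. -/
theorem no_common_zero (ℓ : ℝ) (hℓ : 0 < ℓ) (a b : ℝ) (hab : a ^ 2 ≠ 4 * b ^ 2)
    (δ : ℂ) (hδ : δ ^ 2 = (a : ℂ) ^ 2 - 4 * (b : ℂ) ^ 2)
    (μp μm : ℂ) (hμp : μp = ((a : ℂ) + δ) / 2) (hμm : μm = ((a : ℂ) - δ) / 2) :
    ¬ ∃ z : ℂ, (z - μm) * exp (2 * I * z * ℓ) = z + μm
      ∧ (z - μp) * exp (2 * I * z * ℓ) = z + μp := by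
  rintro ⟨z, h1, h2⟩
  have hδ0 : δ ≠ 0 := by
    intro h
    apply hab
    have hC : (a : ℂ) ^ 2 = 4 * (b : ℂ) ^ 2 := by
      rw [h] at hδ; linear_combination -hδ
    exact_mod_cast hC
  have hd : (μp - μm) * (exp (2 * I * z * ℓ) + 1) = 0 := by
    linear_combination h1 - h2
  have hpm : μp - μm = δ := by rw [hμp, hμm]; ring
  rw [hpm] at hd
  have hE : exp (2 * I * z * ℓ) = -1 := by
    rcases mul_eq_zero.mp hd with h | h
    · exact absurd h hδ0
    · linear_combination h
  rw [hE] at h1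
  have hz : z = 0 := by linear_combination (-1/2 : ℂ) * h1
  rw [hz] at hE
  simp at hE
  exact absurd hE (by norm_num)
end

section
/- For every ε > 0 there exists R > 0 such that: for all s ∈ [0,1], μ ∈ ℂ with |μ| ≤ 1, and z ∈ ℂ with |z| ≥ R satisfying (z − sμ)e^{2izℓ} = z + sμ, the distance from z to the lattice (π/ℓ)ℤ is less than ε. -/
open Complex

/-!
At a zero, `(z - sμ)(e^{2izℓ} - 1) = 2sμ`, so `e^{2izℓ} - 1 = O(1/‖z‖)` uniformly in `s` and `μ`.
Near `1` the principal logarithm is Lipschitz, and it inverts `exp` up to `2πiℤ`; hence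
`2izℓ` lies within `O(1/‖z‖)` of `2πiℤ`, that is, `z` lies within `O(1/‖z‖)` of `(π/ℓ)ℤ`.
-/

lemma norm_exp_sub_one_le_of_mul_exp_eq {z a w : ℂ} (ha : ‖a‖ ≤ 1) (hz : 1 < ‖z‖)
    (h : (z - a) * exp w = z + a) : ‖exp w - 1‖ ≤ 2 / (‖z‖ - 1) := by
  have hfactor : (z - a) * (exp w - 1) = 2 * a := by linear_combination h
  have hdist : ‖z‖ - 1 ≤ ‖z - a‖ := by linarith [norm_sub_norm_le z a]
  rw [le_div_iff₀ (by linarith)]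
  calc ‖exp w - 1‖ * (‖z‖ - 1) ≤ ‖exp w - 1‖ * ‖z - a‖ := by gcongr
    _ = 2 * ‖a‖ := by rw [mul_comm, ← norm_mul, hfactor, norm_mul, Complex.norm_two]
    _ ≤ 2 := by linarith

lemma exists_int_norm_sub_mul_pi_div_le {ℓ : ℝ} (hℓ : 0 < ℓ) {z : ℂ}
    (h : ‖exp (2 * I * z * ℓ) - 1‖ ≤ 1 / 2) :
    ∃ n : ℤ, ‖z - n * (Real.pi / ℓ)‖ ≤ 3 / (4 * ℓ) * ‖exp (2 * I * z * ℓ) - 1‖ := by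
  set u := exp (2 * I * z * ℓ)
  have hlog : ‖log (1 + (u - 1))‖ ≤ 3 / 2 * ‖u - 1‖ := norm_log_one_add_half_le_self h
  rw [add_sub_cancel] at hlog
  obtain ⟨k, hk⟩ : ∃ k : ℤ, log u = 2 * I * z * ℓ + k * (2 * Real.pi * I) :=
    exp_eq_exp_iff_exists_int.mp (exp_log (exp_ne_zero _))
  have hℓ' : (ℓ : ℂ) ≠ 0 := ofReal_ne_zero.mpr hℓ.ne'
  have hz : z - ((-k : ℤ) : ℂ) * (Real.pi / ℓ) = log u / (2 * I * ℓ) := by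
    field_simp
    push_cast
    linear_combination -hk
  refine ⟨-k, ?_⟩
  rw [hz, norm_div, norm_mul, norm_mul, Complex.norm_two, norm_I, norm_real,
    Real.norm_of_nonneg hℓ.le, div_le_iff₀ (by positivity)]
  calc ‖log u‖ ≤ 3 / 2 * ‖u - 1‖ := hlog
    _ = 3 / (4 * ℓ) * ‖u - 1‖ * (2 * 1 * ℓ) := by field_simp; ring

/-- Large zeros of `φ_{sμ}(z) = (z - sμ)e^{2izℓ} - (z + sμ)` are uniformly close
to the lattice `(π/ℓ)ℤ`, uniformly in `s ∈ [0,1]` and `|μ| ≤ 1`. -/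
theorem zeros_near_lattice (ℓ : ℝ) (hℓ : 0 < ℓ) (ε : ℝ) (hε : 0 < ε) :
    ∃ R > 0, ∀ s : ℝ, s ∈ Set.Icc (0:ℝ) 1 → ∀ μ : ℂ, ‖μ‖ ≤ 1 →
      ∀ z : ℂ, R ≤ ‖z‖ →
        (z - s * μ) * exp (2 * I * z * ℓ) = z + s * μ →
        ∃ n : ℤ, ‖z - n * (Real.pi / ℓ)‖ < ε := by
  refine ⟨5 + 3 / (ℓ * ε), by positivity, fun s hs μ hμ z hz hzero => ?_⟩
  have hsμ : ‖(s : ℂ) * μ‖ ≤ 1 := by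
    rw [norm_mul, norm_real, Real.norm_of_nonneg hs.1]
    exact mul_le_one₀ hs.2 (norm_nonneg _) hμ
  have hR : 4 + 3 / (ℓ * ε) ≤ ‖z‖ - 1 := by linarith
  have hR₀ : 0 < 3 / (ℓ * ε) := by positivity
  have hexp := norm_exp_sub_one_le_of_mul_exp_eq hsμ (by linarith) hzero
  have hsmall : 2 / (‖z‖ - 1) ≤ 1 / 2 := by
    rw [div_le_div_iff₀ (by linarith) two_pos]; linarith
  obtain ⟨n, hn⟩ := exists_int_norm_sub_mul_pi_div_le hℓ (hexp.trans hsmall)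
  refine ⟨n, hn.trans_lt ?_⟩
  calc 3 / (4 * ℓ) * ‖exp (2 * I * z * ℓ) - 1‖ ≤ 3 / (4 * ℓ) * (2 / (‖z‖ - 1)) := by gcongr
    _ < ε := by
      have hlarge : 3 < ℓ * ε * (‖z‖ - 1) := by
        rw [← div_lt_iff₀' (by positivity)]; linarith
      rw [div_mul_div_comm, div_lt_iff₀ (by nlinarith)]
      linarith
end

section
/- Let μ ∈ ℂ, ν = π/ℓ, and φ(z) = (z−μ)e^{2izℓ} − (z+μ), φ₀(z) = z(e^{2izℓ} − 1). For all sufficiently large n ∈ ℕ, one has |φ(z) − φ₀(z)| < |φ₀(z)| for all z on the circle |z − nν| = ν/6, and consequently φ has exactly one zero (counted with multiplicity) in the disk D(nν, ν/6). -/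
/-!
With `a = nν` we have `exp (2iℓa) = 1`. For `z ≠ μ`, `φ z = 0` iff
`exp (2iℓ(z - a)) = (z + μ) / (z - μ)`, and on the disc `‖z - a‖ ≤ ν/6` the exponent has modulus
at most `π/3`, so this says `z = a + log ((z + μ) / (z - μ)) / (2iℓ)`. For large `n` the
right-hand side maps the closed disc into the open one and is `1/2`-Lipschitz there (its size is
`O(‖μ‖/n)`, its Lipschitz constant `O(‖μ‖/n²)`), so the Banach fixed-point theorem gives exactly
one zero, with no need for the argument principle. At a zero,
`(z - μ) φ' z = 2μ + 2iℓ(z - μ)(z + μ)`, which cannot vanish for large `‖z‖`. On the circle,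
`φ - φ₀ = -μ (exp (2iℓz) + 1)` stays bounded while `‖φ₀ z‖ ≥ c ‖z‖`, where `c > 0` is the minimum
of `‖exp u - 1‖` on `‖u‖ = π/3`.
-/

open Complex Metric Set Filter
open scoped NNReal Real

theorem Complex.norm_log_sub_log_le {r : ℝ} (hr : r < 1) {w₁ w₂ : ℂ}
    (h₁ : w₁ ∈ closedBall 1 r) (h₂ : w₂ ∈ closedBall 1 r) :
    ‖log w₁ - log w₂‖ ≤ (1 - r)⁻¹ * ‖w₁ - w₂‖ := by
  have hre : ∀ w ∈ closedBall (1 : ℂ) r, 1 - r ≤ w.re := fun w hw => by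
    have := (abs_re_le_norm (w - 1)).trans (mem_closedBall_iff_norm.1 hw)
    rw [sub_re, one_re] at this
    linarith [abs_le.1 this]
  refine (convex_closedBall 1 r).norm_image_sub_le_of_norm_hasDerivWithin_le
    (fun w hw => (hasDerivAt_log (Or.inl (by linarith [hre w hw]))).hasDerivWithinAt)
    (fun w hw => ?_) h₂ h₁
  rw [norm_inv]
  exact inv_anti₀ (by linarith) ((hre w hw).trans (re_le_norm w))

theorem Complex.exists_pos_le_norm_exp_sub_one {ρ : ℝ} (hρ : 0 < ρ) (hρπ : ρ < 2 * π) :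
    ∃ c > 0, ∀ u : ℂ, ‖u‖ = ρ → c ≤ ‖exp u - 1‖ := by
  obtain ⟨u₀, hu₀, hmin⟩ := (isCompact_sphere (0 : ℂ) ρ).exists_isMinOn
    (NormedSpace.sphere_nonempty.2 hρ.le)
    (by fun_prop : Continuous fun u => ‖exp u - 1‖).continuousOn
  rw [mem_sphere_zero_iff_norm] at hu₀
  refine ⟨‖exp u₀ - 1‖, norm_pos_iff.2 (sub_ne_zero.2 fun h => ?_),
    fun u hu => hmin (mem_sphere_zero_iff_norm.2 hu)⟩
  obtain ⟨k, rfl⟩ := exp_eq_one_iff.1 h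
  simp only [norm_mul, norm_intCast, Complex.norm_two, norm_real, norm_I,
    Real.norm_of_nonneg Real.pi_pos.le] at hu₀
  rcases eq_or_ne k 0 with rfl | hk
  · simp at hu₀; linarith
  · have : (1 : ℝ) ≤ |(k : ℝ)| := by exact_mod_cast Int.one_le_abs hk
    nlinarith [Real.pi_pos]

theorem Complex.exp_eq_iff_eq_log {u w : ℂ} (hw : w ≠ 0) (hu : ‖u‖ < π) :
    exp u = w ↔ u = log w := by
  have him := abs_lt.1 ((abs_im_le_norm u).trans_lt hu)
  constructor
  · rintro rfl
    exact (log_exp him.1 him.2.le).symm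
  · rintro rfl
    exact exp_log hw

theorem le_norm_sub_of_mem_closedBall {E : Type*} [SeminormedAddCommGroup E] {a b z : E} {r : ℝ}
    (hz : z ∈ closedBall a r) : ‖a‖ - r - ‖b‖ ≤ ‖z - b‖ := by
  linarith [norm_sub_norm_le a z, mem_closedBall_iff_norm'.1 hz, norm_sub_norm_le z b]

theorem existsUnique_fixedPt_of_mapsTo_ball {E : Type*} [MetricSpace E] [CompleteSpace E]
    {F : E → E} {a : E} {r : ℝ} {K : ℝ≥0} (hr : 0 ≤ r) (hK : K < 1)
    (hF : LipschitzOnWith K F (closedBall a r)) (hmaps : MapsTo F (closedBall a r) (ball a r)) :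
    ∃! z, z ∈ ball a r ∧ F z = z := by
  have hmaps' : MapsTo F (closedBall a r) (closedBall a r) := fun z hz =>
    ball_subset_closedBall (hmaps hz)
  obtain ⟨z, hz, hfix, -⟩ := ContractingWith.exists_fixedPoint' isClosed_closedBall.isComplete
    hmaps' ⟨hK, hF.mapsToRestrict hmaps'⟩ (mem_closedBall_self hr) (edist_ne_top _ _)
  refine ⟨z, ⟨hfix ▸ hmaps hz, hfix⟩, fun y ⟨hy, hyfix⟩ => dist_le_zero.1 ?_⟩
  have := hF.dist_le_mul y (ball_subset_closedBall hy) z hz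
  rw [hyfix, hfix.eq] at this
  nlinarith [dist_nonneg (x := y) (y := z), (show (K : ℝ) < 1 from hK)]

noncomputable def phi (ℓ : ℝ) (μ z : ℂ) : ℂ := (z - μ) * exp (2 * I * z * ℓ) - (z + μ)

noncomputable def phiRatio (μ z : ℂ) : ℂ := (z + μ) / (z - μ)

noncomputable def phiFixMap (ℓ : ℝ) (μ a z : ℂ) : ℂ := a + log (phiRatio μ z) / (2 * I * ℓ)

section

variable {ℓ r D c : ℝ} {μ a z : ℂ}

theorem norm_two_mul_I_mul_ofReal (hℓ : 0 ≤ ℓ) (w : ℂ) : ‖2 * I * w * ℓ‖ = 2 * ℓ * ‖w‖ := by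
  simp [abs_of_nonneg hℓ]; ring

theorem norm_two_mul_I_mul_ofReal' (hℓ : 0 ≤ ℓ) : ‖2 * I * (ℓ : ℂ)‖ = 2 * ℓ := by
  simpa using norm_two_mul_I_mul_ofReal hℓ 1

theorem norm_phiRatio_sub_one_le (hD : 0 < D) (hz : D ≤ ‖z - μ‖) :
    ‖phiRatio μ z - 1‖ ≤ 2 * ‖μ‖ / D := by
  have hz' := norm_pos_iff.1 (hD.trans_le hz)
  rw [show phiRatio μ z - 1 = 2 * μ / (z - μ) by rw [phiRatio]; field_simp; ring, norm_div,
    norm_mul, Complex.norm_two]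
  gcongr

theorem norm_phiRatio_sub_phiRatio_le {z₁ z₂ : ℂ} (hD : 0 < D) (h₁ : D ≤ ‖z₁ - μ‖)
    (h₂ : D ≤ ‖z₂ - μ‖) : ‖phiRatio μ z₁ - phiRatio μ z₂‖ ≤ 2 * ‖μ‖ / D ^ 2 * ‖z₁ - z₂‖ := by
  have h₁' := norm_pos_iff.1 (hD.trans_le h₁)
  have h₂' := norm_pos_iff.1 (hD.trans_le h₂)
  have : phiRatio μ z₁ - phiRatio μ z₂ = 2 * μ * (z₂ - z₁) / ((z₁ - μ) * (z₂ - μ)) := by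
    rw [phiRatio, phiRatio]; field_simp; ring
  rw [this, norm_div, norm_mul, norm_mul, norm_mul, Complex.norm_two, norm_sub_rev z₂,
    div_mul_eq_mul_div, sq]
  gcongr

theorem exp_two_mul_I_mul_sub (ha : exp (2 * I * a * ℓ) = 1) (z : ℂ) :
    exp (2 * I * (z - a) * ℓ) = exp (2 * I * z * ℓ) := by
  rw [← mul_one (exp (2 * I * (z - a) * ℓ)), ← ha, ← exp_add]
  ring_nf

theorem phi_eq_zero_iff_phiFixMap_eq (hℓ : 0 < ℓ) (hr : 2 * ℓ * r < π)
    (ha : exp (2 * I * a * ℓ) = 1) (hz : z ∈ closedBall a r) (hzμ : z - μ ≠ 0) (hzμ' : z + μ ≠ 0) :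
    phi ℓ μ z = 0 ↔ phiFixMap ℓ μ a z = z := by
  have hℓ' : (2 * I * ℓ : ℂ) ≠ 0 := by simp [hℓ.ne']
  have hu : ‖2 * I * (z - a) * ℓ‖ < π := by
    rw [norm_two_mul_I_mul_ofReal hℓ.le]
    exact lt_of_le_of_lt (by gcongr; exact mem_closedBall_iff_norm.1 hz) hr
  calc phi ℓ μ z = 0 ↔ exp (2 * I * (z - a) * ℓ) = phiRatio μ z := by
        rw [exp_two_mul_I_mul_sub ha, phiRatio, eq_div_iff hzμ, phi, sub_eq_zero, mul_comm]
    _ ↔ 2 * I * (z - a) * ℓ = log (phiRatio μ z) :=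
        exp_eq_iff_eq_log (div_ne_zero hzμ' hzμ) hu
    _ ↔ phiFixMap ℓ μ a z = z := by
        rw [phiFixMap, ← eq_sub_iff_add_eq', div_eq_iff hℓ', eq_comm]
        ring_nf

theorem phiRatio_mem_closedBall_one (hD : 0 < D) (h4 : 4 * ‖μ‖ ≤ D) (hz : D ≤ ‖z - μ‖) :
    phiRatio μ z ∈ closedBall 1 (1 / 2) := by
  rw [mem_closedBall_iff_norm]
  refine (norm_phiRatio_sub_one_le hD hz).trans ?_
  rw [div_le_iff₀ hD]
  linarith

theorem norm_log_phiRatio_sub_log_phiRatio_le {z₁ z₂ : ℂ} (hD : 0 < D) (h4 : 4 * ‖μ‖ ≤ D)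
    (h₁ : D ≤ ‖z₁ - μ‖) (h₂ : D ≤ ‖z₂ - μ‖) :
    ‖log (phiRatio μ z₁) - log (phiRatio μ z₂)‖ ≤ 4 * ‖μ‖ / D ^ 2 * ‖z₁ - z₂‖ := by
  calc _ ≤ (1 - 1 / 2)⁻¹ * ‖phiRatio μ z₁ - phiRatio μ z₂‖ :=
        norm_log_sub_log_le one_half_lt_one (phiRatio_mem_closedBall_one hD h4 h₁)
          (phiRatio_mem_closedBall_one hD h4 h₂)
    _ ≤ 2 * (2 * ‖μ‖ / D ^ 2 * ‖z₁ - z₂‖) := by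
        norm_num only; gcongr; exact norm_phiRatio_sub_phiRatio_le hD h₁ h₂
    _ = 4 * ‖μ‖ / D ^ 2 * ‖z₁ - z₂‖ := by ring

theorem norm_log_phiRatio_le (hD : 0 < D) (h4 : 4 * ‖μ‖ ≤ D) (hz : D ≤ ‖z - μ‖) :
    ‖log (phiRatio μ z)‖ ≤ 4 * ‖μ‖ / D := by
  calc _ ≤ (1 - 1 / 2)⁻¹ * ‖phiRatio μ z - 1‖ := by
        simpa using norm_log_sub_log_le one_half_lt_one (phiRatio_mem_closedBall_one hD h4 hz)
          (mem_closedBall_self one_half_pos.le)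
    _ ≤ 2 * (2 * ‖μ‖ / D) := by
        norm_num only; gcongr; exact norm_phiRatio_sub_one_le hD hz
    _ = 4 * ‖μ‖ / D := by ring

theorem phiFixMap_mapsTo (hℓ : 0 < ℓ) (hD : 0 < D) (hDa : D ≤ ‖a‖ - r - ‖μ‖)
    (h4 : 4 * ‖μ‖ ≤ D) (hball : 2 * ‖μ‖ < ℓ * r * D) :
    MapsTo (phiFixMap ℓ μ a) (closedBall a r) (ball a r) := by
  intro z hz
  have hlog := norm_log_phiRatio_le hD h4 (hDa.trans (le_norm_sub_of_mem_closedBall hz))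
  rw [mem_ball_iff_norm, phiFixMap, add_sub_cancel_left, norm_div, norm_two_mul_I_mul_ofReal' hℓ.le,
    div_lt_iff₀ (by positivity)]
  refine hlog.trans_lt ?_
  rw [div_lt_iff₀ hD]
  linarith

theorem phiFixMap_lipschitzOnWith (hℓ : 0 < ℓ) (hD : 0 < D) (hDa : D ≤ ‖a‖ - r - ‖μ‖)
    (h4 : 4 * ‖μ‖ ≤ D) (hcontr : 4 * ‖μ‖ ≤ ℓ * D ^ 2) :
    LipschitzOnWith (1 / 2) (phiFixMap ℓ μ a) (closedBall a r) := by
  refine LipschitzOnWith.of_dist_le_mul fun z₁ h₁ z₂ h₂ => ?_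
  have hlog := norm_log_phiRatio_sub_log_phiRatio_le hD h4
    (hDa.trans (le_norm_sub_of_mem_closedBall h₁)) (hDa.trans (le_norm_sub_of_mem_closedBall h₂))
  rw [dist_eq_norm, dist_eq_norm, phiFixMap, phiFixMap, add_sub_add_left_eq_sub, ← sub_div,
    norm_div, norm_two_mul_I_mul_ofReal' hℓ.le, div_le_iff₀ (by positivity)]
  have hK : 4 * ‖μ‖ / D ^ 2 ≤ ℓ := by rw [div_le_iff₀ (by positivity)]; linarith
  calc _ ≤ ℓ * ‖z₁ - z₂‖ := hlog.trans (by gcongr)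
    _ = _ := by push_cast; ring

theorem hasDerivAt_phi (ℓ : ℝ) (μ z : ℂ) :
    HasDerivAt (phi ℓ μ) (exp (2 * I * z * ℓ) * (1 + 2 * I * ℓ * (z - μ)) - 1) z := by
  have h := (((hasDerivAt_id' z).const_mul (2 * I)).mul_const (ℓ : ℂ)).cexp
  exact ((((hasDerivAt_id' z).sub_const μ).mul h).sub ((hasDerivAt_id' z).add_const μ)).congr_deriv
    (by ring)

theorem sub_mul_deriv_phi (hz : phi ℓ μ z = 0) :
    (z - μ) * deriv (phi ℓ μ) z = 2 * μ + 2 * I * ℓ * ((z - μ) * (z + μ)) := by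
  rw [(hasDerivAt_phi ℓ μ z).deriv]
  rw [phi] at hz
  linear_combination (1 + 2 * I * ℓ * (z - μ)) * hz

theorem deriv_phi_ne_zero (hℓ : 0 < ℓ) (hD : 0 < D) (h₁ : D ≤ ‖z - μ‖) (h₂ : D ≤ ‖z + μ‖)
    (hsimple : ‖μ‖ < ℓ * D ^ 2) (hz : phi ℓ μ z = 0) : deriv (phi ℓ μ) z ≠ 0 := by
  intro h
  have key := sub_mul_deriv_phi hz
  rw [h, mul_zero, eq_comm, add_eq_zero_iff_eq_neg'] at key
  have := congrArg norm key
  rw [norm_neg, norm_mul (2 * I * (ℓ : ℂ)), norm_two_mul_I_mul_ofReal' hℓ.le, norm_mul, norm_mul,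
    Complex.norm_two] at this
  nlinarith [mul_le_mul h₁ h₂ hD.le (norm_nonneg _)]

theorem norm_phi_sub_lt_of_norm_sub_eq (hℓ : 0 < ℓ) (ha : exp (2 * I * a * ℓ) = 1)
    (hc : ∀ u : ℂ, ‖u‖ = 2 * ℓ * r → c ≤ ‖exp u - 1‖) (hD : 0 < D) (hDa : D ≤ ‖a‖ - r - ‖μ‖)
    (hcircle : ‖μ‖ * (Real.exp (2 * ℓ * r) + 1) < c * D) (hz : ‖z - a‖ = r) :
    ‖phi ℓ μ z - z * (exp (2 * I * z * ℓ) - 1)‖ < ‖z * (exp (2 * I * z * ℓ) - 1)‖ := by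
  have hu : ‖2 * I * (z - a) * ℓ‖ = 2 * ℓ * r := by rw [norm_two_mul_I_mul_ofReal hℓ.le, hz]
  have hzD : D ≤ ‖z‖ := by
    linarith [norm_sub_norm_le a z, norm_sub_rev a z, norm_nonneg μ]
  calc ‖phi ℓ μ z - z * (exp (2 * I * z * ℓ) - 1)‖ = ‖μ‖ * ‖exp (2 * I * z * ℓ) + 1‖ := by
        rw [phi, ← norm_neg, ← norm_mul]; ring_nf
    _ ≤ ‖μ‖ * (Real.exp (2 * ℓ * r) + 1) := by
        gcongr
        refine (norm_add_le _ _).trans ?_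
        rw [← exp_two_mul_I_mul_sub ha, norm_one, ← hu]
        gcongr
        exact norm_exp_le_exp_norm _
    _ < c * D := hcircle
    _ ≤ ‖exp (2 * I * z * ℓ) - 1‖ * ‖z‖ := by
        gcongr
        rw [← exp_two_mul_I_mul_sub ha]; exact hc _ hu
    _ = ‖z * (exp (2 * I * z * ℓ) - 1)‖ := by rw [norm_mul, mul_comm]

theorem rouche_phi_of_exp_eq_one (hℓ : 0 < ℓ) (hr : 0 < r) (hrπ : 2 * ℓ * r < π)
    (ha : exp (2 * I * a * ℓ) = 1) (hc : ∀ u : ℂ, ‖u‖ = 2 * ℓ * r → c ≤ ‖exp u - 1‖)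
    (hDa : D ≤ ‖a‖ - r - ‖μ‖) (h4 : 4 * ‖μ‖ ≤ D) (hball : 2 * ‖μ‖ < ℓ * r * D)
    (hcontr : 4 * ‖μ‖ ≤ ℓ * D ^ 2) (hcircle : ‖μ‖ * (Real.exp (2 * ℓ * r) + 1) < c * D) :
    (∀ z : ℂ, ‖z - a‖ = r →
        ‖phi ℓ μ z - z * (exp (2 * I * z * ℓ) - 1)‖ < ‖z * (exp (2 * I * z * ℓ) - 1)‖) ∧
      (∃! z : ℂ, ‖z - a‖ < r ∧ phi ℓ μ z = 0) ∧
      (∀ z : ℂ, ‖z - a‖ < r → phi ℓ μ z = 0 → deriv (phi ℓ μ) z ≠ 0) := by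
  have hD : 0 < D := pos_of_mul_pos_right (hball.trans_le' (by positivity)) (by positivity)
  have hsub : ∀ z ∈ closedBall a r, D ≤ ‖z - μ‖ := fun z hz =>
    hDa.trans (le_norm_sub_of_mem_closedBall hz)
  have hadd : ∀ z ∈ closedBall a r, D ≤ ‖z + μ‖ := fun z hz => by
    have := le_norm_sub_of_mem_closedBall (b := -μ) hz
    rw [norm_neg, sub_neg_eq_add] at this
    linarith
  have hzero_iff : ∀ z ∈ closedBall a r, phi ℓ μ z = 0 ↔ phiFixMap ℓ μ a z = z := fun z hz =>
    phi_eq_zero_iff_phiFixMap_eq hℓ hrπ ha hz (norm_pos_iff.1 (hD.trans_le (hsub z hz)))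
      (norm_pos_iff.1 (hD.trans_le (hadd z hz)))
  have hclosed {z : ℂ} (hz : ‖z - a‖ < r) : z ∈ closedBall a r :=
    ball_subset_closedBall (mem_ball_iff_norm.2 hz)
  refine ⟨fun z hz => norm_phi_sub_lt_of_norm_sub_eq hℓ ha hc hD hDa hcircle hz, ?_,
    fun z hz => deriv_phi_ne_zero hℓ hD (hsub z (hclosed hz)) (hadd z (hclosed hz))
      (by nlinarith [norm_nonneg μ, mul_pos hℓ (pow_pos hD 2)])⟩
  obtain ⟨z, ⟨hz, hfix⟩, huniq⟩ := existsUnique_fixedPt_of_mapsTo_ball hr.le one_half_lt_one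
    (phiFixMap_lipschitzOnWith hℓ hD hDa h4 hcontr) (phiFixMap_mapsTo hℓ hD hDa h4 hball)
  rw [mem_ball_iff_norm] at hz
  exact ⟨z, ⟨hz, (hzero_iff z (hclosed hz)).2 hfix⟩, fun y ⟨hy, hy0⟩ =>
    huniq y ⟨mem_ball_iff_norm.2 hy, (hzero_iff y (hclosed hy)).1 hy0⟩⟩

end

/-- Rouché estimate: for `n` large enough, `|φ(z) - φ₀(z)| < |φ₀(z)|` on the
circle `|z - nν| = ν/6` (`ν = π/ℓ`), and consequently `φ` has exactly one
(simple) zero in the disk `D(nν, ν/6)`. -/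
theorem rouche_phi (ℓ : ℝ) (hℓ : 0 < ℓ) (μ : ℂ) (ν : ℝ) (hν : ν = Real.pi / ℓ)
    (φ φ₀ : ℂ → ℂ)
    (hφ : φ = fun w => (w - μ) * exp (2 * I * w * ℓ) - (w + μ))
    (hφ₀ : φ₀ = fun w => w * (exp (2 * I * w * ℓ) - 1)) :
    ∃ N : ℕ, ∀ n : ℕ, N ≤ n →
      (∀ z : ℂ, ‖z - (n : ℂ) * ν‖ = ν / 6 →
        ‖φ z - φ₀ z‖ < ‖φ₀ z‖)
      ∧ (∃! z : ℂ, ‖z - (n : ℂ) * ν‖ < ν / 6 ∧ φ z = 0)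
      ∧ (∀ z : ℂ, ‖z - (n : ℂ) * ν‖ < ν / 6 → φ z = 0 → deriv φ z ≠ 0) := by
  obtain rfl : φ = phi ℓ μ := hφ
  subst hφ₀ hν
  have hπℓ : 0 < π / ℓ := by positivity
  have hρ : 2 * ℓ * (π / ℓ / 6) = π / 3 := by field_simp; ring
  obtain ⟨c, hc0, hc⟩ := exists_pos_le_norm_exp_sub_one (ρ := 2 * ℓ * (π / ℓ / 6))
    (by positivity) (by rw [hρ]; linarith [Real.pi_pos])
  have hnode (n : ℕ) : exp (2 * I * (n * (π / ℓ : ℝ)) * ℓ) = 1 := by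
    have : (ℓ : ℂ) ≠ 0 := ofReal_ne_zero.2 hℓ.ne'
    exact exp_eq_one_iff.2 ⟨n, by push_cast; field_simp⟩
  have hnorm (n : ℕ) : ‖(n : ℂ) * (π / ℓ : ℝ)‖ = n * (π / ℓ) := by
    simp [abs_of_pos hℓ, abs_of_pos Real.pi_pos]
  set D : ℕ → ℝ := fun n => n * (π / ℓ) - π / ℓ / 6 - ‖μ‖
  have hD : Tendsto D atTop atTop :=
    (tendsto_atTop_add_const_right _ (-(π / ℓ / 6 + ‖μ‖))
      (tendsto_natCast_atTop_atTop.atTop_mul_const hπℓ)).congr fun n => by simp only [D]; ring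
  refine eventually_atTop.1 ?_
  filter_upwards [hD.eventually_ge_atTop (4 * ‖μ‖),
    (hD.const_mul_atTop (by positivity : 0 < ℓ * (π / ℓ / 6))).eventually_gt_atTop (2 * ‖μ‖),
    ((hD.atTop_mul_atTop₀ hD).const_mul_atTop hℓ).eventually_ge_atTop (4 * ‖μ‖),
    (hD.const_mul_atTop hc0).eventually_gt_atTop (‖μ‖ * (Real.exp (2 * ℓ * (π / ℓ / 6)) + 1))]
    with n h4 hball hcontr hcircle
  exact rouche_phi_of_exp_eq_one hℓ (by positivity) (by rw [hρ]; linarith [Real.pi_pos]) (hnode n)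
    hc (by rw [hnorm]) h4 hball (by simpa [sq] using hcontr) hcircle
end

section
/- Let μ ∈ ℂ, ν = π/ℓ, and for large n let z_n be the unique zero of φ(z) = (z−μ)e^{2izℓ} − (z+μ) in the disk D(nν, ν/6). Then z_n = nν − iμ/(nπ) + O(n^{−2}) as n → +∞, and consequently z_n² = n²ν² − 2iμ/ℓ + O(n^{−1}). -/
/-!
Write `u_n = 2iℓ(z_n - nν)`. Since `2iℓ · nν = 2πin`, periodicity of `exp` turns `φ(z_n) = 0` into
`(z_n - μ)(e^{u_n} - 1) = 2μ`, and `z_n - μ ~ nν` gives `e^{u_n} - 1 = O(1/n)`. As `|u_n| ≤ π/3`,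
`u_n = log e^{u_n} → 0`, so `u_n = O(1/n)` and `u_n = (e^{u_n} - 1) + O(u_n²) = 2μ/(nν) + O(1/n²)`,
which is the first expansion. Squaring `z_n = nν + u_n/(2iℓ)` gives the second.
-/

open Complex Filter Asymptotics Topology

lemma Complex.exp_sub_one_isEquivalent_id : (fun x : ℂ => exp x - 1) ~[𝓝 0] fun x => x := by
  simpa [IsEquivalent, Finset.sum_range_succ, sub_sub, Pi.sub_def] using
    exp_sub_sum_range_succ_isLittleO_pow 1

lemma Complex.exp_sub_one_sub_id_isBigO_sq : (fun x : ℂ => exp x - 1 - x) =O[𝓝 0] (· ^ 2) := by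
  simpa [Finset.sum_range_succ, sub_sub] using exp_sub_sum_range_isBigO_pow 2

lemma tendsto_nhds_zero_of_tendsto_cexp {α : Type*} {l : Filter α} {u : α → ℂ}
    (him : ∀ᶠ x in l, -Real.pi < (u x).im ∧ (u x).im ≤ Real.pi)
    (h : Tendsto (fun x => exp (u x)) l (𝓝 1)) : Tendsto u l (𝓝 0) := by
  have hlog : Tendsto (fun x => log (exp (u x))) l (𝓝 0) := by
    rw [← log_one]
    exact (continuousAt_clog one_mem_slitPlane).tendsto.comp h
  refine hlog.congr' ?_
  filter_upwards [him] with x hx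
  exact log_exp hx.1 hx.2

lemma isBigO_of_cexp_sub_one_isBigO {α : Type*} {l : Filter α} {u : α → ℂ} {g : α → ℝ}
    (him : ∀ᶠ x in l, -Real.pi < (u x).im ∧ (u x).im ≤ Real.pi) (hg : Tendsto g l (𝓝 0))
    (h : (fun x => exp (u x) - 1) =O[l] g) : u =O[l] g := by
  have hexp : Tendsto (fun x => exp (u x)) l (𝓝 1) := by
    simpa using (h.trans_tendsto hg).add_const 1
  have hu := tendsto_nhds_zero_of_tendsto_cexp him hexp
  exact (exp_sub_one_isEquivalent_id.comp_tendsto hu).isBigO_symm.trans h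

lemma natCast_mul_inv_isBigO_inv (c : ℂ) :
    (fun n : ℕ => ((n : ℂ) * c)⁻¹) =O[atTop] fun n : ℕ => (n : ℝ)⁻¹ :=
  .of_bound ‖c‖⁻¹ (.of_forall fun n => by simp [mul_comm])

section Roots

variable {ℓ ν : ℝ} {μ : ℂ} {z : ℕ → ℂ}

lemma sub_mul_exp_sub_one_eq_of_root (hνℓ : ν * ℓ = Real.pi) (n : ℕ) {w : ℂ}
    (hw : (w - μ) * exp (2 * I * w * ℓ) - (w + μ) = 0) :
    (w - μ) * (exp (2 * I * ℓ * (w - n * ν)) - 1) = 2 * μ := by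
  have hperiod : exp (2 * I * w * ℓ) = exp (2 * I * ℓ * (w - n * ν)) := by
    have : 2 * I * w * ℓ = 2 * I * ℓ * (w - n * ν) + n * (2 * Real.pi * I) := by
      rw [← hνℓ]; push_cast; ring
    rw [this, exp_add, exp_nat_mul_two_pi_mul_I, mul_one]
  rw [← hperiod]
  linear_combination hw

lemma sub_isEquivalent_natCast_mul (hν : ν ≠ 0)
    (hw : (fun n : ℕ => z n - n * ν) =O[atTop] fun _ => (1 : ℝ)) (μ : ℂ) :
    (fun n => z n - μ) ~[atTop] fun n : ℕ => (n : ℂ) * ν := by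
  have hgrow : (fun _ => (1 : ℝ)) =o[atTop] fun n : ℕ => (n : ℂ) * ν := by
    rw [isLittleO_one_left_iff]
    simp only [norm_mul, Complex.norm_natCast, Complex.norm_real, Real.norm_eq_abs]
    exact tendsto_natCast_atTop_atTop.atTop_mul_const (abs_pos.2 hν)
  refine IsLittleO.isEquivalent ?_
  refine ((hw.sub (isBigO_const_one ℝ μ atTop)).trans_isLittleO hgrow).congr_left fun n => ?_
  simp only [Pi.sub_apply]
  ring

lemma cexp_root_sub_one_isBigO_inv (hνℓ : ν * ℓ = Real.pi) (hν : ν ≠ 0)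
    (hw : (fun n : ℕ => z n - n * ν) =O[atTop] fun _ => (1 : ℝ))
    (hroot : ∀ᶠ n in atTop, (z n - μ) * exp (2 * I * z n * ℓ) - (z n + μ) = 0) :
    (fun n : ℕ => exp (2 * I * ℓ * (z n - n * ν)) - 1) =O[atTop] fun n : ℕ => (n : ℝ)⁻¹ := by
  have hequiv := sub_isEquivalent_natCast_mul hν hw μ
  have hne : ∀ᶠ n in atTop, z n - μ ≠ 0 := by
    filter_upwards [hequiv.isBigO_symm.eq_zero_imp, eventually_ne_atTop 0] with n hn hn0 h
    simp_all
  have hinv := hequiv.inv.isBigO.trans (natCast_mul_inv_isBigO_inv ν)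
  refine (hinv.const_mul_left (2 * μ)).congr' ?_ EventuallyEq.rfl
  filter_upwards [hroot, hne] with n hn hne
  rw [← sub_mul_exp_sub_one_eq_of_root hνℓ n hn, Pi.inv_apply]
  field_simp

lemma root_sub_natCast_mul_isBigO_inv (hνℓ : ν * ℓ = Real.pi) (hν : 0 < ν)
    (hroot : ∀ᶠ n in atTop, (z n - μ) * exp (2 * I * z n * ℓ) - (z n + μ) = 0)
    (hdisk : ∀ᶠ n in atTop, ‖z n - n * ν‖ < ν / 6) :
    (fun n : ℕ => z n - n * ν) =O[atTop] fun n : ℕ => (n : ℝ)⁻¹ := by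
  have hw : (fun n : ℕ => z n - n * ν) =O[atTop] fun _ => (1 : ℝ) :=
    .of_bound (ν / 6) (hdisk.mono fun n hn => by simpa using hn.le)
  have hℓ : 0 < ℓ := pos_of_mul_pos_right (hνℓ ▸ Real.pi_pos) hν.le
  have him : ∀ᶠ n in atTop,
      -Real.pi < (2 * I * ℓ * (z n - n * ν)).im ∧ (2 * I * ℓ * (z n - n * ν)).im ≤ Real.pi := by
    filter_upwards [hdisk] with n hn
    have hnorm : ‖2 * I * ℓ * (z n - n * ν)‖ < Real.pi := calc
      ‖2 * I * ℓ * (z n - n * ν)‖ = 2 * |ℓ| * ‖z n - n * ν‖ := by simp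
      _ ≤ 2 * |ℓ| * (ν / 6) := by gcongr
      _ = Real.pi / 3 := by rw [← hνℓ, abs_of_pos hℓ]; ring
      _ < Real.pi := by linarith [Real.pi_pos]
    have := abs_lt.1 ((abs_im_le_norm _).trans_lt hnorm)
    exact ⟨this.1, this.2.le⟩
  have hu := isBigO_of_cexp_sub_one_isBigO him tendsto_inv_atTop_nhds_zero_nat
    (cexp_root_sub_one_isBigO_inv hνℓ hν.ne' hw hroot)
  have hℓC : (ℓ : ℂ) ≠ 0 := ofReal_ne_zero.2 hℓ.ne'
  refine (hu.const_mul_left (2 * I * ℓ)⁻¹).congr_left fun n => ?_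
  field_simp

lemma root_sub_expansion_isBigO_inv_sq (hνℓ : ν * ℓ = Real.pi) (hν : 0 < ν)
    (hroot : ∀ᶠ n in atTop, (z n - μ) * exp (2 * I * z n * ℓ) - (z n + μ) = 0)
    (hdisk : ∀ᶠ n in atTop, ‖z n - n * ν‖ < ν / 6) :
    (fun n : ℕ => z n - ((n : ℂ) * ν - I * μ / ((n : ℂ) * Real.pi)))
      =O[atTop] fun n : ℕ => (n : ℝ)⁻¹ ^ 2 := by
  have hw : (fun n : ℕ => z n - n * ν) =O[atTop] fun _ => (1 : ℝ) :=
    .of_bound (ν / 6) (hdisk.mono fun n hn => by simpa using hn.le)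
  have hu := (root_sub_natCast_mul_isBigO_inv hνℓ hν hroot hdisk).const_mul_left (2 * I * ℓ)
  have hquad := (exp_sub_one_sub_id_isBigO_sq.comp_tendsto
    (hu.trans_tendsto tendsto_inv_atTop_nhds_zero_nat)).trans (hu.pow 2)
  -- `e^u - 1 - 2μ/(nν) = (e^u - 1)(μ - (z - nν))/(nν)` because `(z - μ)(e^u - 1) = 2μ`
  have hcorr : (fun n : ℕ => (exp (2 * I * ℓ * (z n - n * ν)) - 1) *
      ((μ - (z n - n * ν)) * ((n : ℂ) * ν)⁻¹)) =O[atTop] fun n : ℕ => (n : ℝ)⁻¹ ^ 2 := by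
    refine ((cexp_root_sub_one_isBigO_inv hνℓ hν.ne' hw hroot).mul
      (((isBigO_const_one ℝ μ atTop).sub hw).mul (natCast_mul_inv_isBigO_inv ν))).congr_right ?_
    intro n; ring
  have hℓ : (ℓ : ℂ) ≠ 0 := ofReal_ne_zero.2 (pos_of_mul_pos_right (hνℓ ▸ Real.pi_pos) hν.le).ne'
  have hνC : (ν : ℂ) ≠ 0 := ofReal_ne_zero.2 hν.ne'
  have hνℓC : (ν : ℂ) * ℓ = Real.pi := by exact_mod_cast hνℓ
  refine ((hcorr.sub hquad).const_mul_left (2 * I * ℓ)⁻¹).congr' ?_ EventuallyEq.rfl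
  filter_upwards [hroot, eventually_ne_atTop 0] with n hn hn0
  have hroot' := sub_mul_exp_sub_one_eq_of_root hνℓ n hn
  simp only [Function.comp_apply, ← hνℓC]
  field_simp
  linear_combination -hroot' - 2 * μ * I_sq

lemma root_sq_sub_expansion_isBigO_inv (hνℓ : ν * ℓ = Real.pi) (hν : 0 < ν)
    (hroot : ∀ᶠ n in atTop, (z n - μ) * exp (2 * I * z n * ℓ) - (z n + μ) = 0)
    (hdisk : ∀ᶠ n in atTop, ‖z n - n * ν‖ < ν / 6) :
    (fun n : ℕ => z n ^ 2 - ((n : ℂ) ^ 2 * (ν : ℂ) ^ 2 - 2 * I * μ / ℓ))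
      =O[atTop] fun n : ℕ => (n : ℝ)⁻¹ := by
  have hlin : (fun n : ℕ => 2 * (n : ℂ) * ν) =O[atTop] fun n : ℕ => (n : ℝ) :=
    .of_bound (2 * |ν|) (.of_forall fun n => le_of_eq (by simp; ring))
  have hinv_sq : (fun n : ℕ => (n : ℝ)⁻¹ ^ 2) =O[atTop] fun n : ℕ => (n : ℝ)⁻¹ := by
    simpa [sq] using (isBigO_refl (fun n : ℕ => (n : ℝ)⁻¹) atTop).mul
      (tendsto_inv_atTop_nhds_zero_nat.isBigO_one ℝ)
  have hcross : (fun n : ℕ => (n : ℝ) * (n : ℝ)⁻¹ ^ 2) =ᶠ[atTop] fun n : ℕ => (n : ℝ)⁻¹ :=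
    (eventually_ne_atTop 0).mono fun n hn => by field_simp
  have hmain := (hlin.mul (root_sub_expansion_isBigO_inv_sq hνℓ hν hroot hdisk)).congr'
    EventuallyEq.rfl hcross
  have hsq := ((root_sub_natCast_mul_isBigO_inv hνℓ hν hroot hdisk).pow 2).trans hinv_sq
  have hℓ : (ℓ : ℂ) ≠ 0 := ofReal_ne_zero.2 (pos_of_mul_pos_right (hνℓ ▸ Real.pi_pos) hν.le).ne'
  have hνC : (ν : ℂ) ≠ 0 := ofReal_ne_zero.2 hν.ne'
  have hνℓC : (ν : ℂ) * ℓ = Real.pi := by exact_mod_cast hνℓ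
  refine (hmain.add hsq).congr' ?_ EventuallyEq.rfl
  filter_upwards [eventually_ne_atTop 0] with n hn
  rw [← hνℓC]
  field_simp
  ring

end Roots

/-- Asymptotics of the zeros `z_n` of `φ(z) = (z-μ)e^{2izℓ} - (z+μ)` in the
disks `D(nν, ν/6)`:
`z_n = nν - iμ/(nπ) + O(n⁻²)` and `z_n² = n²ν² - 2iμ/ℓ + O(n⁻¹)`. -/
theorem zeros_asymptotics (ℓ : ℝ) (hℓ : 0 < ℓ) (μ : ℂ) (ν : ℝ) (hν : ν = Real.pi / ℓ)
    (φ : ℂ → ℂ)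
    (hφ : φ = fun w => (w - μ) * exp (2 * I * w * ℓ) - (w + μ))
    (z : ℕ → ℂ)
    (hz : ∀ᶠ n : ℕ in atTop, φ (z n) = 0 ∧ ‖z n - (n : ℂ) * ν‖ < ν / 6) :
    ∃ C > 0,
      (∀ᶠ n : ℕ in atTop,
        ‖z n - ((n : ℂ) * ν - I * μ / ((n : ℂ) * Real.pi))‖ ≤ C / (n : ℝ) ^ 2)
      ∧ (∀ᶠ n : ℕ in atTop,
        ‖(z n) ^ 2 - ((n : ℂ) ^ 2 * (ν : ℂ) ^ 2 - 2 * I * μ / ℓ)‖ ≤ C / (n : ℝ)) := by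
  have hν₀ : 0 < ν := hν ▸ div_pos Real.pi_pos hℓ
  have hνℓ : ν * ℓ = Real.pi := by rw [hν]; field_simp
  subst hφ
  have hroot := hz.mono fun _ h => h.1
  have hdisk := hz.mono fun _ h => h.2
  obtain ⟨C₁, hC₁, h₁⟩ := (root_sub_expansion_isBigO_inv_sq hνℓ hν₀ hroot hdisk).exists_pos
  obtain ⟨C₂, -, h₂⟩ := (root_sq_sub_expansion_isBigO_inv hνℓ hν₀ hroot hdisk).exists_pos
  refine ⟨max C₁ C₂, lt_max_of_lt_left hC₁, ?_, ?_⟩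
  · filter_upwards [h₁.bound] with n hn
    rw [norm_pow, norm_inv, Real.norm_natCast, inv_pow, ← div_eq_mul_inv] at hn
    exact hn.trans (by gcongr; exact le_max_left _ _)
  · filter_upwards [h₂.bound] with n hn
    rw [norm_inv, Real.norm_natCast, ← div_eq_mul_inv] at hn
    exact hn.trans (by gcongr; exact le_max_right _ _)
end

section
/- Suppose a > 0, b ≠ 0, and U = (u,v) ∈ H²(0,ℓ;ℂ²) satisfies −u'' = λu, −v'' = λv on (0,ℓ) with λ ∈ ℝ, together with boundary conditions u'(0) + i(au(0) + bv(0)) = 0, v'(0) − ib u(0) = 0, u'(ℓ) = v'(ℓ) = 0. Then u = 0 and v = 0. (Hence the transverse operator has no real eigenvalues.) -/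
/-!
Since `λ` is real, `conj ∘ u` solves the same equation as `u`, and the Wronskian
`W(f, g) = f g' - f' g` of two solutions is constant. The Neumann conditions at `ℓ` make
`W(u, ū)`, `W(v, v̄)` and `W(u, v)` vanish at `ℓ`, hence at `0`. Inserting the boundary conditions
at `0`, the first two give `a |u(0)|² = 0` (this is `Im ⟨TU, U⟩ = -a |u(0)|²`), and then the third
gives `b v(0)² = 0`. So the Cauchy data of `u` and `v` at `0` vanish, and uniqueness for the ODE
finishes the proof.
-/

open Complex Set ComplexConjugate

structure SolvesEigenEqOn (lam : ℂ) (s : Set ℝ) (f : ℝ → ℂ) : Prop where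
  differentiable : Differentiable ℝ f
  differentiable_deriv : Differentiable ℝ (deriv f)
  eigen_eq : ∀ x ∈ s, -deriv (deriv f) x = lam * f x

noncomputable def wronskian (f g : ℝ → ℂ) (x : ℝ) : ℂ :=
  f x * deriv g x - deriv f x * g x

theorem deriv_conj (f : ℝ → ℂ) (x : ℝ) : deriv (fun y => conj (f y)) x = conj (deriv f x) :=
  deriv.star

theorem SolvesEigenEqOn.of_contDiff {lam : ℂ} {s : Set ℝ} {f : ℝ → ℂ}
    (hf : ContDiff ℝ 2 f) (heq : ∀ x ∈ s, -deriv (deriv f) x = lam * f x) :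
    SolvesEigenEqOn lam s f :=
  ⟨hf.differentiable (by norm_num), hf.differentiable_deriv_two, heq⟩

theorem SolvesEigenEqOn.conj {lam : ℂ} {s : Set ℝ} {f : ℝ → ℂ}
    (hf : SolvesEigenEqOn lam s f) :
    SolvesEigenEqOn (conj lam) s (fun x => conj (f x)) := by
  have hderiv (h : ℝ → ℂ) : deriv (fun x => conj (h x)) = fun x => conj (deriv h x) :=
    funext (deriv_conj h)
  refine ⟨hf.differentiable.star, ?_, fun x hx => ?_⟩
  · rw [hderiv]
    exact hf.differentiable_deriv.star
  · rw [hderiv, hderiv]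
    simpa using congrArg conj (hf.eigen_eq x hx)

namespace SolvesEigenEqOn

variable {lam : ℂ} {s : Set ℝ} {f g : ℝ → ℂ} {x₀ x₁ : ℝ}

theorem hasDerivAt_wronskian (hf : SolvesEigenEqOn lam s f) (hg : SolvesEigenEqOn lam s g)
    {x : ℝ} (hx : x ∈ s) : HasDerivAt (wronskian f g) 0 x := by
  have hW := ((hf.differentiable x).hasDerivAt.mul (hg.differentiable_deriv x).hasDerivAt).sub
    ((hf.differentiable_deriv x).hasDerivAt.mul (hg.differentiable x).hasDerivAt)
  refine HasDerivAt.congr_deriv (f := wronskian f g) hW ?_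
  linear_combination g x * hf.eigen_eq x hx - f x * hg.eigen_eq x hx

theorem wronskian_eq (hf : SolvesEigenEqOn lam (Icc x₀ x₁) f)
    (hg : SolvesEigenEqOn lam (Icc x₀ x₁) g) {x : ℝ} (hx : x ∈ Icc x₀ x₁) :
    wronskian f g x = wronskian f g x₀ :=
  constant_of_has_deriv_right_zero
    (fun _ hy => (hf.hasDerivAt_wronskian hg hy).continuousAt.continuousWithinAt)
    (fun _ hy => (hf.hasDerivAt_wronskian hg (Ico_subset_Icc_self hy)).hasDerivWithinAt) x hx

theorem wronskian_left_eq_zero (hx : x₀ ≤ x₁) (hf : SolvesEigenEqOn lam (Icc x₀ x₁) f)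
    (hg : SolvesEigenEqOn lam (Icc x₀ x₁) g) (hf' : deriv f x₁ = 0) (hg' : deriv g x₁ = 0) :
    wronskian f g x₀ = 0 := by
  rw [← hf.wronskian_eq hg (right_mem_Icc.2 hx), wronskian, hf', hg']
  ring

theorem eqOn_zero (hf : SolvesEigenEqOn lam (Icc x₀ x₁) f) (h₀ : f x₀ = 0)
    (h₀' : deriv f x₀ = 0) : EqOn f 0 (Icc x₀ x₁) := by
  -- `(f, f')` solves the first-order system `Y' = A Y` with `A (p, q) = (q, -λ p)`.
  let A : ℂ × ℂ →L[ℂ] ℂ × ℂ :=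
    (ContinuousLinearMap.snd ℂ ℂ ℂ).prod (-lam • ContinuousLinearMap.fst ℂ ℂ ℂ)
  have hY : EqOn (fun x => (f x, deriv f x)) (fun _ => 0) (Icc x₀ x₁) := by
    refine ODE_solution_unique_of_mem_Icc_right (v := fun _ => A) (s := fun _ => univ)
      (fun _ _ => A.lipschitz.lipschitzOnWith) ?_ (fun x hx => ?_) (fun _ _ => trivial)
      continuousOn_const (fun _ _ => ?_) (fun _ _ => trivial) (by simp [h₀, h₀'])
    · exact (hf.differentiable.continuous.prodMk
        hf.differentiable_deriv.continuous).continuousOn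
    · have hf'' : deriv (deriv f) x = -lam * f x := by
        linear_combination -hf.eigen_eq x (Ico_subset_Icc_self hx)
      have hY' := (hf.differentiable x).hasDerivAt.prodMk (hf.differentiable_deriv x).hasDerivAt
      rw [hf''] at hY'
      exact hY'.hasDerivWithinAt
    · simpa using hasDerivWithinAt_const _ _ (0 : ℂ × ℂ)
  exact fun x hx => congrArg Prod.fst (hY hx)

end SolvesEigenEqOn

-- `hu`, `hv`, `huv` are the vanishing of `W(u, ū)`, `W(v, v̄)`, `W(u, v)` at `0`,
-- with `u₀, u₁, v₀, v₁` the values of `u, u', v, v'` there.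
theorem eq_zero_of_boundary_wronskians {a b : ℝ} (ha : 0 < a) (hb : b ≠ 0) {u₀ u₁ v₀ v₁ : ℂ}
    (h₁ : u₁ + I * (a * u₀ + b * v₀) = 0) (h₂ : v₁ - I * b * u₀ = 0)
    (hu : u₀ * conj u₁ - u₁ * conj u₀ = 0) (hv : v₀ * conj v₁ - v₁ * conj v₀ = 0)
    (huv : u₀ * v₁ - u₁ * v₀ = 0) : u₀ = 0 ∧ v₀ = 0 := by
  obtain rfl : u₁ = -I * (a * u₀ + b * v₀) := by linear_combination h₁
  obtain rfl : v₁ = I * b * u₀ := by linear_combination h₂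
  simp only [map_mul, map_add, map_neg, conj_I, conj_ofReal] at hu hv
  have hu₀ : u₀ = 0 := by
    have : I * (2 * a) * (u₀ * conj u₀) = 0 := by linear_combination hu + hv
    simpa [ha.ne', mul_conj, I_ne_zero] using this
  subst hu₀
  have : I * b * v₀ ^ 2 = 0 := by linear_combination huv
  simpa [hb, I_ne_zero] using this

/-- No real eigenvalues for the transverse operator: if `a > 0`, `b ≠ 0`,
`λ ∈ ℝ`, and `(u,v)` solves `-u'' = λu`, `-v'' = λv` on `[0,ℓ]` with boundary
conditions `u'(0) + i(au(0) + bv(0)) = 0`, `v'(0) - ibu(0) = 0`,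
`u'(ℓ) = v'(ℓ) = 0`, then `u = v = 0` on `[0,ℓ]`. -/
theorem no_real_eigenvalue (ℓ : ℝ) (hℓ : 0 < ℓ) (a b : ℝ) (ha : 0 < a) (hb : b ≠ 0)
    (lam : ℝ) (u v : ℝ → ℂ)
    (hu : ContDiff ℝ 2 u) (hv : ContDiff ℝ 2 v)
    (hequ : ∀ x ∈ Set.Icc (0:ℝ) ℓ, -(deriv (deriv u)) x = (lam : ℂ) * u x)
    (heqv : ∀ x ∈ Set.Icc (0:ℝ) ℓ, -(deriv (deriv v)) x = (lam : ℂ) * v x)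
    (hbc1 : deriv u 0 + I * ((a : ℂ) * u 0 + (b : ℂ) * v 0) = 0)
    (hbc2 : deriv v 0 - I * (b : ℂ) * u 0 = 0)
    (hbc3 : deriv u ℓ = 0) (hbc4 : deriv v ℓ = 0) :
    ∀ x ∈ Set.Icc (0:ℝ) ℓ, u x = 0 ∧ v x = 0 := by
  have hU := SolvesEigenEqOn.of_contDiff hu hequ
  have hV := SolvesEigenEqOn.of_contDiff hv heqv
  have hUconj : SolvesEigenEqOn lam (Icc 0 ℓ) (fun x => conj (u x)) := by simpa using hU.conj
  have hVconj : SolvesEigenEqOn lam (Icc 0 ℓ) (fun x => conj (v x)) := by simpa using hV.conj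
  have hWu := hU.wronskian_left_eq_zero hℓ.le hUconj hbc3 (by rw [deriv_conj, hbc3, map_zero])
  have hWv := hV.wronskian_left_eq_zero hℓ.le hVconj hbc4 (by rw [deriv_conj, hbc4, map_zero])
  have hWuv := hU.wronskian_left_eq_zero hℓ.le hV hbc3 hbc4
  rw [wronskian, deriv_conj] at hWu hWv
  obtain ⟨hu₀, hv₀⟩ := eq_zero_of_boundary_wronskians ha hb hbc1 hbc2 hWu hWv hWuv
  have hu₀' : deriv u 0 = 0 := by simpa [hu₀, hv₀] using hbc1
  have hv₀' : deriv v 0 = 0 := by simpa [hu₀] using hbc2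
  exact fun x hx => ⟨hU.eqOn_zero hu₀ hu₀' hx, hV.eqOn_zero hv₀ hv₀' hx⟩
end

section
/- Let a ≥ 0, b ∈ ℝ with (a,b) ≠ (0,0), n ∈ ℕ*, ν = π/ℓ, and μ₊ = (a+δ)/2 with δ = √(a²−4b²) if a² ≥ 4b² and δ = i√(4b²−a²) otherwise. Then no zero z of φ₊(z) = (z−μ₊)e^{2izℓ} − (z+μ₊) has Re(z) = nν. -/
open Complex

/-! On the line `Re z = nν` the factor `e^{2izℓ}` equals the positive real `ρ = e^{-2ℓ Im z}`,
so a zero satisfies `z (ρ - 1) = μ₊ (ρ + 1)`. Since `Im z` and `ρ - 1` have opposite signs while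
`Im μ₊ ≥ 0`, the imaginary part forces `Im z = 0`, hence `ρ = 1` and `μ₊ = 0`; but `μ₊ ≠ 0` because
`δ` lies in the closed first quadrant and `δ² = a² - 4b²`. -/

noncomputable def sqrtOfReal (x : ℝ) : ℂ :=
  if 0 ≤ x then (Real.sqrt x : ℂ) else I * (Real.sqrt (-x) : ℂ)

lemma sqrtOfReal_re_nonneg (x : ℝ) : 0 ≤ (sqrtOfReal x).re := by
  unfold sqrtOfReal
  split_ifs <;> simp [Real.sqrt_nonneg]

lemma sqrtOfReal_im_nonneg (x : ℝ) : 0 ≤ (sqrtOfReal x).im := by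
  unfold sqrtOfReal
  split_ifs <;> simp [Real.sqrt_nonneg]

lemma sqrtOfReal_sq (x : ℝ) : sqrtOfReal x ^ 2 = x := by
  unfold sqrtOfReal
  split_ifs with hx
  · rw [← ofReal_pow, Real.sq_sqrt hx]
  · rw [mul_pow, I_sq, ← ofReal_pow, Real.sq_sqrt (by linarith)]
    push_cast
    ring

lemma ite_sqrt_eq_sqrtOfReal (a b : ℝ) :
    (if a ^ 2 ≥ 4 * b ^ 2 then (Real.sqrt (a ^ 2 - 4 * b ^ 2) : ℂ)
      else I * (Real.sqrt (4 * b ^ 2 - a ^ 2) : ℂ)) = sqrtOfReal (a ^ 2 - 4 * b ^ 2) := by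
  simp only [sqrtOfReal, ge_iff_le, sub_nonneg, neg_sub]

lemma add_sqrtOfReal_div_two_ne_zero {a b : ℝ} (ha : 0 ≤ a) (hab : (a, b) ≠ (0, 0)) :
    ((a : ℂ) + sqrtOfReal (a ^ 2 - 4 * b ^ 2)) / 2 ≠ 0 := by
  intro h
  have hw : sqrtOfReal (a ^ 2 - 4 * b ^ 2) = -a := by linear_combination 2 * h
  have ha0 : a = 0 := by
    have := sqrtOfReal_re_nonneg (a ^ 2 - 4 * b ^ 2)
    rw [hw] at this
    simp only [neg_re, ofReal_re] at this
    linarith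
  have hb0 : b = 0 := by
    have := sqrtOfReal_sq (a ^ 2 - 4 * b ^ 2)
    rw [hw, ha0] at this
    simpa using this
  exact hab (by rw [ha0, hb0])

lemma exp_two_mul_I_mul_eq_of_re_mul_eq {z : ℂ} {ℓ : ℝ} {n : ℤ} (h : z.re * ℓ = n * Real.pi) :
    exp (2 * I * z * ℓ) = Real.exp (-(2 * ℓ * z.im)) := by
  have h' : (z.re : ℂ) * ℓ = n * Real.pi := by exact_mod_cast h
  have harg : 2 * I * z * ℓ = ((-(2 * ℓ * z.im) : ℝ) : ℂ) + n * (2 * Real.pi * I) := by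
    conv_lhs => rw [← re_add_im z]
    push_cast
    linear_combination (2 * I) * h' + 2 * ℓ * z.im * I_sq
  rw [harg, exp_add, exp_int_mul_two_pi_mul_I, mul_one, ofReal_exp]

lemma mul_exp_neg_mul_sub_one_neg {c y : ℝ} (hc : 0 < c) (hy : y ≠ 0) :
    y * (Real.exp (-(c * y)) - 1) < 0 := by
  rcases hy.lt_or_gt with hy | hy
  · exact mul_neg_of_neg_of_pos hy
      (sub_pos.2 (Real.one_lt_exp_iff.2 (neg_pos.2 (mul_neg_of_pos_of_neg hc hy))))
  · exact mul_neg_of_pos_of_neg hy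
      (sub_neg.2 (Real.exp_lt_one_iff.2 (neg_neg_of_pos (mul_pos hc hy))))

lemma eq_zero_of_sub_mul_exp_sub_add_eq_zero {μ z : ℂ} {c : ℝ} (hc : 0 < c) (hμ : 0 ≤ μ.im)
    (h : (z - μ) * (Real.exp (-(c * z.im)) : ℂ) - (z + μ) = 0) : μ = 0 := by
  set ρ := Real.exp (-(c * z.im))
  have him : z.im * (ρ - 1) = μ.im * (ρ + 1) := by
    have := congrArg im h
    simp only [sub_im, mul_im, add_im, ofReal_re, ofReal_im, mul_zero, zero_im] at this
    linarith
  have hy : z.im = 0 := by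
    by_contra hy
    have hρ : 0 < ρ := Real.exp_pos _
    nlinarith [mul_exp_neg_mul_sub_one_neg hc hy]
  have hρ : ρ = 1 := by simp [ρ, hy]
  rw [hρ, ofReal_one, mul_one] at h
  linear_combination -h / 2

theorem phi_plus_no_zero_on_line_general (ℓ : ℝ) (hℓ : 0 < ℓ) (a b : ℝ)
    (ha : 0 ≤ a) (hab : (a, b) ≠ (0, 0)) (n : ℕ)
    (ν : ℝ) (hν : ν = Real.pi / ℓ)
    (δ : ℂ)
    (hδ : δ = if a ^ 2 ≥ 4 * b ^ 2 then (Real.sqrt (a ^ 2 - 4 * b ^ 2) : ℂ)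
              else I * (Real.sqrt (4 * b ^ 2 - a ^ 2) : ℂ))
    (μp : ℂ) (hμp : μp = ((a : ℂ) + δ) / 2) :
    ∀ z : ℂ, (z - μp) * exp (2 * I * z * ℓ) - (z + μp) = 0 → z.re ≠ n * ν := by
  intro z hz hre
  rw [ite_sqrt_eq_sqrtOfReal] at hδ
  have hμ_im : 0 ≤ μp.im := by
    rw [hμp, hδ]
    simpa using div_nonneg (sqrtOfReal_im_nonneg (a ^ 2 - 4 * b ^ 2)) zero_le_two
  have hre_mul : z.re * ℓ = ((n : ℤ) : ℝ) * Real.pi := by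
    rw [hre, hν]
    field_simp
    norm_cast
  rw [exp_two_mul_I_mul_eq_of_re_mul_eq hre_mul] at hz
  have hμ_zero := eq_zero_of_sub_mul_exp_sub_add_eq_zero (by positivity) hμ_im hz
  rw [hμp, hδ] at hμ_zero
  exact add_sqrtOfReal_div_two_ne_zero ha hab hμ_zero

/-- For `a ≥ 0`, `b ∈ ℝ`, `(a,b) ≠ (0,0)` and `n ≥ 1`, no zero of
`φ₊(z) = (z-μ₊)e^{2izℓ} - (z+μ₊)` has real part `nν` (`ν = π/ℓ`). -/
theorem phi_plus_no_zero_on_line (ℓ : ℝ) (hℓ : 0 < ℓ) (a b : ℝ)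
    (ha : 0 ≤ a) (hab : (a, b) ≠ (0, 0)) (n : ℕ) (hn : 1 ≤ n)
    (ν : ℝ) (hν : ν = Real.pi / ℓ)
    (δ : ℂ)
    (hδ : δ = if a ^ 2 ≥ 4 * b ^ 2 then (Real.sqrt (a ^ 2 - 4 * b ^ 2) : ℂ)
              else I * (Real.sqrt (4 * b ^ 2 - a ^ 2) : ℂ))
    (μp : ℂ) (hμp : μp = ((a : ℂ) + δ) / 2) :
    ∀ z : ℂ, (z - μp) * exp (2 * I * z * ℓ) - (z + μp) = 0 → z.re ≠ n * ν :=
  phi_plus_no_zero_on_line_general ℓ hℓ a b ha hab n ν hν δ hδ μp hμp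
end

section
/- Let a > 0, b ∈ ℝ with a² < 4b², n ∈ ℕ*, ν = π/ℓ, and μ₋ = (a − i√(4b²−a²))/2. The function φ₋(z) = (z−μ₋)e^{2izℓ} − (z+μ₋) has a zero with real part nν if and only if a < 2nν and e^{2nπ√(4b²/a² − 1)} = (2nν + a)/(2nν − a); in that case the zero is unique and equals z = nν − i nν √(4b²/a² − 1). -/
/-! On the line `Re z = nν` we have `2 Re(z) ℓ = 2nπ`, so `e^{2izℓ}` is the positive real
`t = e^{-2ℓ Im z}`. A zero of `φ₋` then satisfies `(t - 1) z = (t + 1) μ₋`, i.e. `z = κ μ₋` with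
`κ` real; the real parts force `κ = 2nν/a`, hence `t > 1`, `a < 2nν`, `t = (2nν + a)/(2nν - a)` and
`Im z = -nν √(4b² - a²)/a`, and conversely these make `z` a zero. -/

open Complex

theorem cexp_two_mul_I_mul_mul_eq_of_re {ℓ : ℝ} {n : ℤ} {z : ℂ}
    (hz : z.re * ℓ = n * Real.pi) :
    cexp (2 * I * z * ℓ) = (Real.exp (-(2 * ℓ * z.im)) : ℂ) := by
  have h : 2 * I * z * ℓ = ((-(2 * ℓ * z.im) : ℝ) : ℂ) + n * (2 * Real.pi * I) := by
    apply Complex.ext <;> simp [mul_re, mul_im]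
    · ring
    · linear_combination 2 * hz
  rw [h, exp_add, exp_int_mul_two_pi_mul_I, mul_one, ofReal_exp]

theorem sub_mul_ofReal_sub_add_eq_zero_iff (z μ : ℂ) (t : ℝ) :
    (z - μ) * t - (z + μ) = 0 ↔
      (t - 1) * z.re = (t + 1) * μ.re ∧ (t - 1) * z.im = (t + 1) * μ.im := by
  simp only [Complex.ext_iff, sub_re, sub_im, mul_re, mul_im, add_re, add_im, ofReal_re, ofReal_im,
    zero_re, zero_im]
  constructor <;> rintro ⟨h₁, h₂⟩ <;> constructor <;> linarith

theorem sub_one_mul_eq_and_sub_one_mul_eq_iff {a s x y t : ℝ} (ha : 0 < a) (hx : 0 < x) (ht : 0 < t) :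
    ((t - 1) * x = (t + 1) * (a / 2) ∧ (t - 1) * y = (t + 1) * -(s / 2)) ↔
      a < 2 * x ∧ t = (2 * x + a) / (2 * x - a) ∧ y = -(x * s / a) := by
  constructor
  · rintro ⟨hre, him⟩
    have ht₁ : 1 < t := by nlinarith
    have hax : a < 2 * x := by nlinarith
    refine ⟨hax, ?_, ?_⟩
    · rw [eq_div_iff (sub_pos.2 hax).ne']; linarith
    · rw [eq_neg_iff_add_eq_zero, add_div' _ _ _ ha.ne', div_eq_zero_iff, or_iff_left ha.ne']
      have : (t - 1) * (y * a + x * s) = 0 := by linear_combination a * him + s * hre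
      exact (mul_eq_zero.1 this).resolve_left (sub_pos.2 ht₁).ne'
  · rintro ⟨hax, rfl, rfl⟩
    have : 2 * x - a ≠ 0 := (sub_pos.2 hax).ne'
    constructor <;> field_simp <;> ring

theorem sub_mul_cexp_sub_add_eq_zero_iff {ℓ a s : ℝ} {n : ℤ} {z : ℂ} (ha : 0 < a)
    (hz : 0 < z.re) (hzℓ : z.re * ℓ = n * Real.pi) :
    (z - (a - I * s) / 2) * cexp (2 * I * z * ℓ) - (z + (a - I * s) / 2) = 0 ↔
      a < 2 * z.re ∧ Real.exp (2 * n * Real.pi * (s / a)) = (2 * z.re + a) / (2 * z.re - a) ∧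
        z.im = -(z.re * s / a) := by
  have hμre : ((a - I * s) / 2 : ℂ).re = a / 2 := by simp
  have hμim : ((a - I * s) / 2 : ℂ).im = -(s / 2) := by simp [neg_div]
  rw [cexp_two_mul_I_mul_mul_eq_of_re hzℓ, sub_mul_ofReal_sub_add_eq_zero_iff, hμre, hμim,
    sub_one_mul_eq_and_sub_one_mul_eq_iff ha hz (Real.exp_pos _)]
  refine and_congr_right fun _ => and_congr_left fun him => ?_
  rw [him, show -(2 * ℓ * -(z.re * s / a)) = 2 * n * Real.pi * (s / a) by
    linear_combination (2 * s / a) * hzℓ]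

theorem sqrt_div_sq_sub_one (c : ℝ) {a : ℝ} (ha : 0 < a) :
    √(c / a ^ 2 - 1) = √(c - a ^ 2) / a := by
  rw [← Real.sqrt_sq ha.le, ← Real.sqrt_div' _ (sq_nonneg a), Real.sqrt_sq ha.le]
  congr 1
  field_simp

theorem phi_minus_zero_on_line_general (ℓ : ℝ) (hℓ : 0 < ℓ) (a b : ℝ)
    (ha : 0 < a) (n : ℕ) (hn : 1 ≤ n)
    (ν : ℝ) (hν : ν = Real.pi / ℓ)
    (μm : ℂ) (hμm : μm = ((a : ℂ) - I * (Real.sqrt (4 * b ^ 2 - a ^ 2) : ℂ)) / 2)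
    (φm : ℂ → ℂ)
    (hφm : φm = fun z => (z - μm) * exp (2 * I * z * ℓ) - (z + μm)) :
    ((∃ z : ℂ, φm z = 0 ∧ z.re = n * ν) ↔
      (a < 2 * n * ν ∧
        Real.exp (2 * n * Real.pi * Real.sqrt (4 * b ^ 2 / a ^ 2 - 1))
          = (2 * n * ν + a) / (2 * n * ν - a)))
    ∧ (∀ z : ℂ, φm z = 0 → z.re = n * ν →
        z = (n : ℂ) * ν - I * (n : ℂ) * ν * (Real.sqrt (4 * b ^ 2 / a ^ 2 - 1) : ℂ)) := by
  subst hφm hμm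
  set s := √(4 * b ^ 2 - a ^ 2)
  have hν₀ : 0 < n * ν := by rw [hν]; positivity
  have hline : ∀ z : ℂ, z.re = n * ν →
      ((z - (a - I * s) / 2) * cexp (2 * I * z * ℓ) - (z + (a - I * s) / 2) = 0 ↔
        a < 2 * n * ν ∧
          Real.exp (2 * n * Real.pi * (s / a)) = (2 * n * ν + a) / (2 * n * ν - a) ∧
          z.im = -(n * ν * s / a)) := by
    intro z hz
    have hzℓ : z.re * ℓ = (n : ℤ) * Real.pi := by rw [hz, hν, Int.cast_natCast]; field_simp
    rw [sub_mul_cexp_sub_add_eq_zero_iff ha (hz ▸ hν₀) hzℓ, hz]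
    push_cast
    simp only [mul_assoc]
  rw [sqrt_div_sq_sub_one _ ha]
  refine ⟨⟨fun ⟨z, hz₀, hz⟩ => ((hline z hz).1 hz₀).imp_right And.left, fun h => ?_⟩,
    fun z hz₀ hz => ?_⟩
  · exact ⟨⟨n * ν, -(n * ν * s / a)⟩, (hline _ rfl).2 ⟨h.1, h.2, rfl⟩, rfl⟩
  · apply Complex.ext
    · simp [hz]
    · simp [((hline z hz).1 hz₀).2.2, mul_div_assoc, s]

/-- For `a > 0`, `a² < 4b²`, `μ₋ = (a - i√(4b²-a²))/2` and `n ≥ 1`: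
`φ₋` has a zero with real part `nν` iff `a < 2nν` and
`e^{2nπ√(4b²/a² - 1)} = (2nν+a)/(2nν-a)`; in that case the zero is unique and
equals `nν - i nν √(4b²/a² - 1)`. -/
theorem phi_minus_zero_on_line (ℓ : ℝ) (hℓ : 0 < ℓ) (a b : ℝ)
    (ha : 0 < a) (hab : a ^ 2 < 4 * b ^ 2) (n : ℕ) (hn : 1 ≤ n)
    (ν : ℝ) (hν : ν = Real.pi / ℓ)
    (μm : ℂ) (hμm : μm = ((a : ℂ) - I * (Real.sqrt (4 * b ^ 2 - a ^ 2) : ℂ)) / 2)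
    (φm : ℂ → ℂ)
    (hφm : φm = fun z => (z - μm) * exp (2 * I * z * ℓ) - (z + μm)) :
    ((∃ z : ℂ, φm z = 0 ∧ z.re = n * ν) ↔
      (a < 2 * n * ν ∧
        Real.exp (2 * n * Real.pi * Real.sqrt (4 * b ^ 2 / a ^ 2 - 1))
          = (2 * n * ν + a) / (2 * n * ν - a)))
    ∧ (∀ z : ℂ, φm z = 0 → z.re = n * ν →
        z = (n : ℂ) * ν - I * (n : ℂ) * ν * (Real.sqrt (4 * b ^ 2 / a ^ 2 - 1) : ℂ)) :=
  phi_minus_zero_on_line_general ℓ hℓ a b ha n hn ν hν μm hμm φm hφm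
end

section
/- Suppose ξ > 0 and κ < 0 satisfy cosh(κ) sin(ξ) + ξ = 0 and sinh(κ) cos(ξ) + κ = 0. Then sin(ξ) < 0, cos(ξ) < 0, κ = −argcosh(−ξ/sin(ξ)), and ξ satisfies cos(ξ)·√(ξ²/sin(ξ)² − 1) + argcosh(−ξ/sin(ξ)) = 0. -/
/-- Inverse hyperbolic cosine on `[1, ∞)`. -/
noncomputable def arcosh (x : ℝ) : ℝ := Real.log (x + Real.sqrt (x ^ 2 - 1))

/-- If `ξ > 0`, `κ < 0` satisfy `cosh(κ)sin(ξ) + ξ = 0` and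
`sinh(κ)cos(ξ) + κ = 0`, then `sin(ξ) < 0`, `cos(ξ) < 0`,
`κ = -argcosh(-ξ/sin ξ)` and `cos(ξ)√(ξ²/sin(ξ)² - 1) + argcosh(-ξ/sin ξ) = 0`. -/
theorem system_ch_sin (ξ κ : ℝ) (hξ : 0 < ξ) (hκ : κ < 0)
    (h1 : Real.cosh κ * Real.sin ξ + ξ = 0)
    (h2 : Real.sinh κ * Real.cos ξ + κ = 0) :
    Real.sin ξ < 0 ∧ Real.cos ξ < 0
    ∧ κ = -arcosh (-(ξ / Real.sin ξ))
    ∧ Real.cos ξ * Real.sqrt (ξ ^ 2 / Real.sin ξ ^ 2 - 1)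
        + arcosh (-(ξ / Real.sin ξ)) = 0 := by
  have hc1 : (1 : ℝ) ≤ Real.cosh κ := Real.one_le_cosh κ
  have hsin : Real.sin ξ < 0 := by nlinarith
  have hs : Real.sinh κ < 0 := by
    have := Real.sinh_lt_sinh.mpr hκ
    simpa using this
  have hcos : Real.cos ξ < 0 := by nlinarith
  have hsne : Real.sin ξ ≠ 0 := ne_of_lt hsin
  have hch : Real.cosh κ = -(ξ / Real.sin ξ) := by
    field_simp
    nlinarith [h1]
  have hsq : (-(ξ / Real.sin ξ)) ^ 2 - 1 = Real.sinh κ ^ 2 := by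
    rw [← hch]
    nlinarith [Real.cosh_sq κ]
  have hsqrt : Real.sqrt ((-(ξ / Real.sin ξ)) ^ 2 - 1) = -Real.sinh κ := by
    rw [hsq]
    rw [show Real.sinh κ ^ 2 = (-Real.sinh κ) ^ 2 by ring]
    exact Real.sqrt_sq (by linarith)
  have harc : arcosh (-(ξ / Real.sin ξ)) = -κ := by
    unfold arcosh
    rw [hsqrt, ← hch, show Real.cosh κ + -Real.sinh κ = Real.cosh κ - Real.sinh κ by ring,
      Real.cosh_sub_sinh, Real.log_exp]
  have hsq2 : ξ ^ 2 / Real.sin ξ ^ 2 - 1 = (-(ξ / Real.sin ξ)) ^ 2 - 1 := by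
    field_simp
  refine ⟨hsin, hcos, by rw [harc]; ring, ?_⟩
  rw [hsq2, hsqrt, harc]
  nlinarith [h2]
end

section
/- For each k ∈ ℕ, the function g(ξ) = cos(ξ)·√(ξ²/sin(ξ)² − 1) + argcosh(−ξ/sin(ξ)), defined for ξ in the interval I_k = ((2k+1)π, (2k+3/2)π) (where sin(ξ) < 0 and −ξ/sin(ξ) ≥ 1), has exactly one zero in I_k: g is strictly increasing on I_k, tends to −∞ as ξ → (2k+1)π⁺, and is positive at ξ = (2k+3/2)π. -/
/-!
Write `u = -ξ / sin ξ`, so that `g ξ = cos ξ * √(u² - 1) + arcosh u` with `u > 1` wherever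
`sin ξ < 0` and `ξ > 1`. Differentiating,
`g' = (-sin ξ (u² - 1) + (sin ξ - ξ cos ξ)² / (sin² ξ · (-sin ξ))) / √(u² - 1) > 0`.
As `ξ → (2k+1)π⁺` we have `u → ∞` and `cos ξ → -1`, so the term `-√(u² - 1)`, linear in `u`,
beats the logarithmic growth of `arcosh u`. At `ξ = (2k+3/2)π`, `cos ξ = 0` and `sin ξ = -1`, so
`g ξ = arcosh ξ > 0`.
-/

open Set

open Real hiding arcosh
open Filter Topology

lemma arcosh_eq_real_arcosh : arcosh = Real.arcosh := rfl

lemma Real.arcosh_le_log_two_mul {x : ℝ} (hx : 1 ≤ x) : Real.arcosh x ≤ log (2 * x) := by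
  refine log_le_log (by positivity) ?_
  have : √(x ^ 2 - 1) ≤ x :=
    (sqrt_le_sqrt (by linarith : x ^ 2 - 1 ≤ x ^ 2)).trans_eq (sqrt_sq (by linarith))
  linarith

lemma tendsto_mul_sqrt_add_arcosh_atBot {α : Type*} {l : Filter α} {c u : α → ℝ}
    (hc : ∀ᶠ a in l, c a ≤ -1 / 2) (hu : Tendsto u l atTop) :
    Tendsto (fun a ↦ c a * √(u a ^ 2 - 1) + Real.arcosh (u a)) l atBot := by
  have hlin : Tendsto (fun a ↦ log 16 - 1 - u a / 8) l atBot :=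
    tendsto_atBot_add_const_left _ _
      (tendsto_neg_atTop_atBot.comp (hu.atTop_div_const (by norm_num)))
  refine tendsto_atBot_mono' _ ?_ hlin
  filter_upwards [hc, hu.eventually_ge_atTop 2] with a hca hua
  have hsqrt : u a / 2 ≤ √(u a ^ 2 - 1) := le_sqrt_of_sq_le (by nlinarith)
  have hcos : c a * √(u a ^ 2 - 1) ≤ -1 / 2 * √(u a ^ 2 - 1) :=
    mul_le_mul_of_nonneg_right hca (sqrt_nonneg _)
  have hlog : log (2 * u a) ≤ log 16 - 1 + u a / 8 := by
    rw [show 2 * u a = 16 * (u a / 8) by ring, log_mul (by norm_num) (by positivity)]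
    linarith [log_le_sub_one_of_pos (show 0 < u a / 8 by positivity)]
  linarith [Real.arcosh_le_log_two_mul (x := u a) (by linarith)]

lemma hasDerivAt_cos_mul_sqrt_add_arcosh {u : ℝ → ℝ} {u' ξ : ℝ} (hu : HasDerivAt u u' ξ)
    (h1 : 1 < u ξ) :
    HasDerivAt (fun x ↦ cos x * √(u x ^ 2 - 1) + Real.arcosh (u x))
      ((-sin ξ * (u ξ ^ 2 - 1) + u' * (1 + u ξ * cos ξ)) / √(u ξ ^ 2 - 1)) ξ := by
  have hw : 0 < u ξ ^ 2 - 1 := by nlinarith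
  have hr := (sqrt_pos.2 hw).ne'
  refine (((hasDerivAt_cos ξ).mul (((hu.pow 2).sub_const 1).sqrt hw.ne')).add
    ((Real.hasDerivAt_arcosh h1).comp ξ hu)).congr_deriv ?_
  simp only [Pi.pow_apply]
  field_simp
  rw [sq_sqrt hw.le]
  ring

lemma sin_neg_of_mem_Ioo (k : ℤ) {ξ : ℝ} (hξ : ξ ∈ Ioo ((2 * k + 1) * π) ((2 * k + 2) * π)) :
    sin ξ < 0 := by
  rw [← sin_sub_int_mul_two_pi ξ (k + 1)]
  obtain ⟨h1, h2⟩ := hξ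
  apply sin_neg_of_neg_of_neg_pi_lt <;> push_cast <;> linarith

lemma one_lt_neg_div_sin {ξ : ℝ} (hξ : 1 < ξ) (hs : sin ξ < 0) : 1 < -(ξ / sin ξ) := by
  rw [← div_neg, one_lt_div (neg_pos.2 hs)]
  linarith [neg_one_le_sin ξ]

noncomputable def gFun (ξ : ℝ) : ℝ :=
  cos ξ * √((-(ξ / sin ξ)) ^ 2 - 1) + Real.arcosh (-(ξ / sin ξ))

lemma hasDerivAt_gFun {ξ : ℝ} (hξ : 1 < ξ) (hs : sin ξ < 0) :
    HasDerivAt gFun ((-sin ξ * ((-(ξ / sin ξ)) ^ 2 - 1)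
      + ((sin ξ - ξ * cos ξ) / sin ξ) ^ 2 / -sin ξ) / √((-(ξ / sin ξ)) ^ 2 - 1)) ξ := by
  have hu := ((hasDerivAt_id ξ).div (hasDerivAt_sin ξ) hs.ne).neg
  refine (hasDerivAt_cos_mul_sqrt_add_arcosh hu (one_lt_neg_div_sin hξ hs)).congr_deriv ?_
  simp only [Pi.neg_apply, Pi.div_apply, id]
  congr 1
  have := hs.ne
  field_simp
  ring

lemma deriv_gFun_pos {ξ : ℝ} (hξ : 1 < ξ) (hs : sin ξ < 0) : 0 < deriv gFun ξ := by
  rw [(hasDerivAt_gFun hξ hs).deriv]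
  have hw : 0 < (-(ξ / sin ξ)) ^ 2 - 1 := by nlinarith [one_lt_neg_div_sin hξ hs]
  have hs' : 0 < -sin ξ := neg_pos.2 hs
  positivity

section Interval

variable (k : ℕ)

lemma one_lt_and_sin_neg_of_mem_Ioo {ξ : ℝ}
    (hξ : ξ ∈ Ioo ((2 * k + 1) * π) ((2 * k + 2) * π)) : 1 < ξ ∧ sin ξ < 0 :=
  ⟨by nlinarith [hξ.1, pi_gt_three, k.cast_nonneg (α := ℝ)],
    sin_neg_of_mem_Ioo k (by exact_mod_cast hξ)⟩

lemma continuousOn_gFun : ContinuousOn gFun (Ioo ((2 * k + 1) * π) ((2 * k + 2) * π)) := by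
  intro ξ hξ
  obtain ⟨h1, hs⟩ := one_lt_and_sin_neg_of_mem_Ioo k hξ
  exact (hasDerivAt_gFun h1 hs).continuousAt.continuousWithinAt

lemma strictMonoOn_gFun : StrictMonoOn gFun (Ioo ((2 * k + 1) * π) ((2 * k + 2) * π)) := by
  refine strictMonoOn_of_deriv_pos (convex_Ioo _ _) (continuousOn_gFun k) fun ξ hξ ↦ ?_
  rw [interior_Ioo] at hξ
  obtain ⟨h1, hs⟩ := one_lt_and_sin_neg_of_mem_Ioo k hξ
  exact deriv_gFun_pos h1 hs

lemma tendsto_neg_div_sin_nhdsGT :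
    Tendsto (fun ξ ↦ -(ξ / sin ξ)) (𝓝[>] ((2 * k + 1) * π)) atTop := by
  set a : ℝ := (2 * k + 1) * π
  have hsin : sin a = 0 := by simpa using sin_nat_mul_pi (2 * k + 1)
  have hneg : Tendsto (fun ξ ↦ -sin ξ) (𝓝[>] a) (𝓝[>] 0) := by
    refine tendsto_nhdsWithin_iff.2 ⟨?_, ?_⟩
    · simpa [hsin] using ((continuous_sin.tendsto a).neg).mono_left nhdsWithin_le_nhds
    · have hI : Ioo a ((2 * k + 2) * π) ∈ 𝓝[>] a := Ioo_mem_nhdsGT (by nlinarith [pi_pos])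
      filter_upwards [hI] with ξ hξ
      exact neg_pos.2 (one_lt_and_sin_neg_of_mem_Ioo k hξ).2
  refine (tendsto_nhdsWithin_of_tendsto_nhds tendsto_id).pos_mul_atTop (by positivity)
    (tendsto_inv_nhdsGT_zero.comp hneg) |>.congr fun ξ ↦ ?_
  simp [div_eq_mul_inv]

lemma tendsto_gFun_nhdsGT : Tendsto gFun (𝓝[>] ((2 * k + 1) * π)) atBot := by
  have hcos : cos ((2 * k + 1) * π) = -1 := by
    rw [← cos_nat_mul_two_pi_add_pi k]
    ring_nf
  have hc : ∀ᶠ ξ in 𝓝[>] ((2 * k + 1) * π), cos ξ ≤ -1 / 2 :=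
    nhdsWithin_le_nhds <| (continuous_cos.tendsto _).eventually
      (ge_mem_nhds (by rw [hcos]; norm_num))
  exact tendsto_mul_sqrt_add_arcosh_atBot hc (tendsto_neg_div_sin_nhdsGT k)

lemma gFun_pos : 0 < gFun ((2 * k + 3 / 2) * π) := by
  have h : (2 * k + 3 / 2) * π = -(π / 2) + (k + 1 : ℕ) * (2 * π) := by push_cast; ring
  have hsin : sin ((2 * k + 3 / 2) * π) = -1 := by
    rw [h, sin_add_nat_mul_two_pi, sin_neg, sin_pi_div_two]
  have hcos : cos ((2 * k + 3 / 2) * π) = 0 := by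
    rw [h, cos_add_nat_mul_two_pi, cos_neg, cos_pi_div_two]
  rw [gFun, hsin, hcos, zero_mul, zero_add, div_neg, div_one, neg_neg]
  exact Real.arcosh_pos (by nlinarith [pi_gt_three, k.cast_nonneg (α := ℝ)])

end Interval

lemma StrictMonoOn.existsUnique_eq_of_tendsto_atBot {α δ : Type*}
    [ConditionallyCompleteLinearOrder α] [TopologicalSpace α] [OrderTopology α] [DenselyOrdered α]
    [LinearOrder δ] [TopologicalSpace δ] [OrderClosedTopology δ]
    {f : α → δ} {a b : α} {y : δ} (hab : a < b)
    (hf : StrictMonoOn f (Ioc a b)) (hc : ContinuousOn f (Ioc a b))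
    (ha : Tendsto f (𝓝[>] a) atBot) (hb : y ≤ f b) : ∃! x, x ∈ Ioc a b ∧ f x = y := by
  have : (𝓝[>] a).NeBot := nhdsGT_neBot_of_exists_gt ⟨b, hab⟩
  obtain ⟨x₀, hx₀, hmem⟩ :=
    ((ha.eventually (eventually_le_atBot y)).and (Ioo_mem_nhdsGT hab)).exists
  have hsub : Icc x₀ b ⊆ Ioc a b := Icc_subset_Ioc hmem.1 le_rfl
  obtain ⟨x, hx, hfx⟩ := intermediate_value_Icc hmem.2.le (hc.mono hsub) ⟨hx₀, hb⟩
  exact ⟨x, ⟨hsub hx, hfx⟩, fun z hz ↦ hf.injOn hz.1 (hsub hx) (hz.2.trans hfx.symm)⟩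

/-- For every `k ∈ ℕ`, the function
`g(ξ) = cos(ξ)√(ξ²/sin(ξ)² - 1) + argcosh(-ξ/sin ξ)` has exactly one zero in
the interval `I_k = ((2k+1)π, (2k+3/2)π]`: it is strictly increasing there,
tends to `-∞` at the left endpoint, and is positive at the right endpoint. -/
theorem g_unique_zero (k : ℕ)
    (g : ℝ → ℝ)
    (hg : g = fun ξ => Real.cos ξ * Real.sqrt (ξ ^ 2 / Real.sin ξ ^ 2 - 1)
      + arcosh (-(ξ / Real.sin ξ))) :
    StrictMonoOn g (Ioc ((2 * k + 1) * Real.pi) ((2 * k + 3 / 2) * Real.pi))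
    ∧ Filter.Tendsto g (nhdsWithin ((2 * k + 1) * Real.pi) (Ioi ((2 * k + 1) * Real.pi))) Filter.atBot
    ∧ 0 < g ((2 * k + 3 / 2) * Real.pi)
    ∧ ∃! ξ : ℝ, ξ ∈ Ioc ((2 * k + 1) * Real.pi) ((2 * k + 3 / 2) * Real.pi) ∧ g ξ = 0 := by
  have hgF : g = gFun := by
    subst hg
    funext ξ
    rw [gFun, neg_sq, div_pow, arcosh_eq_real_arcosh]
  subst hgF
  have hsub : Ioc ((2 * k + 1) * π) ((2 * k + 3 / 2) * π)
      ⊆ Ioo ((2 * k + 1) * π) ((2 * k + 2) * π) :=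
    Ioc_subset_Ioo_right (by nlinarith [pi_pos])
  have hmono := (strictMonoOn_gFun k).mono hsub
  have hlim := tendsto_gFun_nhdsGT k
  have hpos := gFun_pos k
  exact ⟨hmono, hlim, hpos, hmono.existsUnique_eq_of_tendsto_atBot (by nlinarith [pi_pos])
    ((continuousOn_gFun k).mono hsub) hlim hpos.le⟩
end

section
/- Let S be a Hilbert space and (Φ_k)_{k≥1} a family in S. Suppose S decomposes via a family of finite blocks S_n (n in an index set N) such that: (a) there is C₁ ≥ 1 with C₁⁻¹(|u|²+|v|²) ≤ ‖uΦ_{2n+1}+vΦ_{2n+2}‖² ≤ C₁(|u|²+|v|²) for all n and scalars u,v; and (b) there is C₂ > 0 with |⟨U_n, U_{n+m}⟩| ≤ C₂‖U_n‖‖U_{n+m}‖/(nm) for all U_n ∈ S_n, U_{n+m} ∈ S_{n+m}, m ≥ 1. Then for any sequence U_n ∈ S_n with Σ‖U_n‖² < ∞, the series ΣU_n converges in S and ‖Σ_{n≥N} U_n‖² differs from Σ_{n≥N}‖U_n‖² by at most C₂' (Σ_{n≥N} 1/n²)^{1/2} Σ_{n≥N}‖U_n‖² for a constant C₂' depending only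 on C₂. -/
/-!
Expanding `‖∑ U n‖²` leaves the off-diagonal terms `2 Re ∑_{j<k} ⟪U j, U k⟫`, and (b) bounds each
by `C₂ a_j a_k / (j (k - j))` with `a_n = ‖U n‖`. For fixed `j`, Cauchy–Schwarz against the
square-summable kernel `m ↦ 1/m` gives `∑_k a_k / (k - j) ≤ (π²/6)^{1/2} ‖a‖₂`; a second
Cauchy–Schwarz against the weights `1/j` produces the factor `(∑_{j ≥ N} 1/j²)^{1/2} ‖a‖₂`.
This finite-sum estimate gives the Cauchy criterion for `∑ U n` and passes to the limit on tails.
-/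

open Finset Filter Topology Real

theorem sum_sum_eq_sum_diag_add_sum_lt {ι M : Type*} [LinearOrder ι] [AddCommMonoid M]
    (s : Finset ι) (f : ι → ι → M) :
    ∑ i ∈ s, ∑ j ∈ s, f i j = ∑ i ∈ s, f i i + ∑ i ∈ s, ∑ j ∈ s with i < j, (f i j + f j i) := by
  have htri : ∀ i j, f i j =
      (if i = j then f i j else 0)
        + ((if i < j then f i j else 0) + if j < i then f i j else 0) := by
    intro i j
    rcases lt_trichotomy i j with h | rfl | h
    · simp [h, h.ne, h.not_gt]
    · simp
    · simp [h, h.ne', h.not_gt]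
  have hlower : ∑ i ∈ s, ∑ j ∈ s, (if j < i then f i j else 0)
      = ∑ i ∈ s, ∑ j ∈ s, (if i < j then f j i else 0) := sum_comm
  calc ∑ i ∈ s, ∑ j ∈ s, f i j
      = ∑ i ∈ s, ∑ j ∈ s, (if i = j then f i j else 0)
        + (∑ i ∈ s, ∑ j ∈ s, (if i < j then f i j else 0)
          + ∑ i ∈ s, ∑ j ∈ s, (if j < i then f i j else 0)) := by
        simp only [← sum_add_distrib, ← htri]
    _ = _ := by
        rw [hlower, ← sum_add_distrib]
        simp [sum_filter, ← sum_add_distrib, ← ite_add_zero]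

theorem sum_one_div_sub_sq_le (s : Finset ℕ) (j : ℕ) :
    ∑ k ∈ s with j < k, 1 / ((k - j : ℕ) : ℝ) ^ 2 ≤ π ^ 2 / 6 := by
  have hinj : Set.InjOn (· - j) (s.filter (j < ·) : Set ℕ) := by
    intro k hk k' hk' h
    simp only [coe_filter, Set.mem_ofPred_eq] at hk hk' h
    omega
  rw [← sum_image (f := fun m : ℕ => 1 / (m : ℝ) ^ 2) hinj]
  exact sum_le_hasSum _ (fun _ _ => by positivity) hasSum_zeta_two

theorem sum_div_sub_le (s : Finset ℕ) (a : ℕ → ℝ) (j : ℕ) :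
    ∑ k ∈ s with j < k, a k / (k - j : ℕ) ≤ √(π ^ 2 / 6) * √(∑ k ∈ s, a k ^ 2) := by
  calc ∑ k ∈ s with j < k, a k / (k - j : ℕ)
      = ∑ k ∈ s with j < k, 1 / ((k - j : ℕ) : ℝ) * a k := by
        simp only [one_div_mul_eq_div]
    _ ≤ √(∑ k ∈ s with j < k, (1 / ((k - j : ℕ) : ℝ)) ^ 2) * √(∑ k ∈ s with j < k, a k ^ 2) :=
        Real.sum_mul_le_sqrt_mul_sqrt _ _ _
    _ ≤ √(π ^ 2 / 6) * √(∑ k ∈ s, a k ^ 2) := by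
        gcongr
        · simpa only [div_pow, one_pow] using sum_one_div_sub_sq_le s j
        · exact filter_subset _ _

-- `s` may contain `0`: those terms vanish on both sides since `x / 0 = 0` in `ℝ`.
theorem sum_sum_lt_mul_div_mul_sub_le (s : Finset ℕ) {a : ℕ → ℝ} (ha : ∀ n, 0 ≤ a n) :
    ∑ j ∈ s, ∑ k ∈ s with j < k, a j * a k / (j * (k - j : ℕ))
      ≤ √(π ^ 2 / 6) * √(∑ j ∈ s, 1 / (j : ℝ) ^ 2) * ∑ j ∈ s, a j ^ 2 := by
  have hA : √(∑ j ∈ s, a j ^ 2) * √(∑ j ∈ s, a j ^ 2) = ∑ j ∈ s, a j ^ 2 :=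
    mul_self_sqrt (sum_nonneg fun _ _ => sq_nonneg _)
  calc ∑ j ∈ s, ∑ k ∈ s with j < k, a j * a k / (j * (k - j : ℕ))
      = ∑ j ∈ s, 1 / (j : ℝ) * a j * ∑ k ∈ s with j < k, a k / (k - j : ℕ) := by
        simp only [mul_sum, mul_div_mul_comm, one_div_mul_eq_div]
    _ ≤ ∑ j ∈ s, 1 / (j : ℝ) * a j * (√(π ^ 2 / 6) * √(∑ k ∈ s, a k ^ 2)) := by
        gcongr with j
        · exact mul_nonneg (by positivity) (ha j)
        · exact sum_div_sub_le s a j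
    _ = (∑ j ∈ s, 1 / (j : ℝ) * a j) * (√(π ^ 2 / 6) * √(∑ k ∈ s, a k ^ 2)) := (sum_mul ..).symm
    _ ≤ √(∑ j ∈ s, (1 / (j : ℝ)) ^ 2) * √(∑ j ∈ s, a j ^ 2)
          * (√(π ^ 2 / 6) * √(∑ k ∈ s, a k ^ 2)) := by
        gcongr
        exact Real.sum_mul_le_sqrt_mul_sqrt _ _ _
    _ = _ := by
        simp only [div_pow, one_pow]
        linear_combination √(π ^ 2 / 6) * √(∑ j ∈ s, 1 / (j : ℝ) ^ 2) * hA

section InnerProductSpace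

variable {𝕜 E : Type*} [RCLike 𝕜] [NormedAddCommGroup E] [InnerProductSpace 𝕜 E]

theorem abs_norm_sq_sum_sub_sum_norm_sq_le {ι : Type*} [LinearOrder ι] (s : Finset ι) (v : ι → E) :
    |‖∑ i ∈ s, v i‖ ^ 2 - ∑ i ∈ s, ‖v i‖ ^ 2|
      ≤ 2 * ∑ i ∈ s, ∑ j ∈ s with i < j, ‖inner 𝕜 (v i) (v j)‖ := by
  have hexpand : ‖∑ i ∈ s, v i‖ ^ 2 - ∑ i ∈ s, ‖v i‖ ^ 2
      = RCLike.re (∑ i ∈ s, ∑ j ∈ s with i < j, (inner 𝕜 (v i) (v j) + inner 𝕜 (v j) (v i))) := by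
    rw [← inner_self_eq_norm_sq (𝕜 := 𝕜), sum_inner]
    simp_rw [inner_sum]
    rw [sum_sum_eq_sum_diag_add_sum_lt, map_add, map_sum]
    simp only [inner_self_eq_norm_sq, add_sub_cancel_left]
  calc _ ≤ ‖∑ i ∈ s, ∑ j ∈ s with i < j, (inner 𝕜 (v i) (v j) + inner 𝕜 (v j) (v i))‖ :=
        hexpand ▸ RCLike.abs_re_le_norm _
    _ ≤ ∑ i ∈ s, ∑ j ∈ s with i < j, (‖inner 𝕜 (v i) (v j)‖ + ‖inner 𝕜 (v j) (v i)‖) :=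
        (norm_sum_le _ _).trans <| sum_le_sum fun i _ =>
          (norm_sum_le _ _).trans <| sum_le_sum fun j _ => norm_add_le _ _
    _ = 2 * ∑ i ∈ s, ∑ j ∈ s with i < j, ‖inner 𝕜 (v i) (v j)‖ := by
        simp only [norm_inner_symm (v _) (v _), mul_sum, two_mul]

theorem abs_norm_sq_sum_sub_sum_norm_sq_le_of_inner_le (s : Finset ℕ) (v : ℕ → E) {C : ℝ}
    (hC : 0 ≤ C)
    (hv : ∀ j ∈ s, ∀ k ∈ s, j < k →
      ‖inner 𝕜 (v j) (v k)‖ ≤ C * ‖v j‖ * ‖v k‖ / (j * (k - j : ℕ))) :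
    |‖∑ j ∈ s, v j‖ ^ 2 - ∑ j ∈ s, ‖v j‖ ^ 2|
      ≤ 2 * C * √(π ^ 2 / 6) * √(∑ j ∈ s, 1 / (j : ℝ) ^ 2) * ∑ j ∈ s, ‖v j‖ ^ 2 := by
  calc _ ≤ 2 * ∑ j ∈ s, ∑ k ∈ s with j < k, ‖inner 𝕜 (v j) (v k)‖ :=
        abs_norm_sq_sum_sub_sum_norm_sq_le s v
    _ ≤ 2 * ∑ j ∈ s, ∑ k ∈ s with j < k, C * (‖v j‖ * ‖v k‖ / (j * (k - j : ℕ))) := by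
        gcongr with j hj k hk
        rw [mem_filter] at hk
        simpa only [mul_assoc, mul_div_assoc] using hv j hj k hk.1 hk.2
    _ ≤ 2 * C * (√(π ^ 2 / 6) * √(∑ j ∈ s, 1 / (j : ℝ) ^ 2) * ∑ j ∈ s, ‖v j‖ ^ 2) := by
        simp only [← mul_sum, mul_assoc]
        gcongr
        exact (sum_sum_lt_mul_div_mul_sub_le s fun n => norm_nonneg (v n)).trans_eq (mul_assoc ..)
    _ = _ := by ring

theorem norm_sq_sum_le_of_inner_le (s : Finset ℕ) (v : ℕ → E) {C : ℝ} (hC : 0 ≤ C)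
    (hv : ∀ j ∈ s, ∀ k ∈ s, j < k →
      ‖inner 𝕜 (v j) (v k)‖ ≤ C * ‖v j‖ * ‖v k‖ / (j * (k - j : ℕ))) :
    ‖∑ j ∈ s, v j‖ ^ 2 ≤ (1 + 2 * C * (π ^ 2 / 6)) * ∑ j ∈ s, ‖v j‖ ^ 2 := by
  have hζ : √(∑ j ∈ s, 1 / (j : ℝ) ^ 2) ≤ √(π ^ 2 / 6) :=
    sqrt_le_sqrt (sum_le_hasSum _ (fun _ _ => by positivity) hasSum_zeta_two)
  calc ‖∑ j ∈ s, v j‖ ^ 2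
      ≤ ∑ j ∈ s, ‖v j‖ ^ 2
        + 2 * C * √(π ^ 2 / 6) * √(∑ j ∈ s, 1 / (j : ℝ) ^ 2) * ∑ j ∈ s, ‖v j‖ ^ 2 := by
        linarith [le_abs_self (‖∑ j ∈ s, v j‖ ^ 2 - ∑ j ∈ s, ‖v j‖ ^ 2),
          abs_norm_sq_sum_sub_sum_norm_sq_le_of_inner_le s v hC hv]
    _ ≤ ∑ j ∈ s, ‖v j‖ ^ 2 + 2 * C * √(π ^ 2 / 6) * √(π ^ 2 / 6) * ∑ j ∈ s, ‖v j‖ ^ 2 := by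
        gcongr
    _ = (1 + 2 * C * (π ^ 2 / 6)) * ∑ j ∈ s, ‖v j‖ ^ 2 := by
        rw [mul_assoc (2 * C), mul_self_sqrt (by positivity)]
        ring

end InnerProductSpace

theorem summable_of_norm_sq_sum_le {ι E : Type*} [NormedAddCommGroup E] [CompleteSpace E]
    {v : ι → E} (K : ℝ) (hK : ∀ s : Finset ι, ‖∑ i ∈ s, v i‖ ^ 2 ≤ K * ∑ i ∈ s, ‖v i‖ ^ 2)
    (hv : Summable fun i => ‖v i‖ ^ 2) : Summable v := by
  refine summable_iff_vanishing_norm.2 fun ε hε => ?_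
  obtain ⟨s, hs⟩ := summable_iff_vanishing_norm.1 hv (ε ^ 2 / (|K| + 1)) (by positivity)
  refine ⟨s, fun t ht => ?_⟩
  have hA : 0 ≤ ∑ i ∈ t, ‖v i‖ ^ 2 := sum_nonneg fun _ _ => sq_nonneg _
  have hsmall : ∑ i ∈ t, ‖v i‖ ^ 2 < ε ^ 2 / (|K| + 1) := by
    simpa only [Real.norm_eq_abs, abs_of_nonneg hA] using hs t ht
  rw [lt_div_iff₀ (by positivity)] at hsmall
  refine lt_of_pow_lt_pow_left₀ 2 hε.le ((hK t).trans_lt ?_)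
  nlinarith [le_abs_self K]

theorem Summable.ite_le {E : Type*} [NormedAddCommGroup E] [CompleteSpace E] {f : ℕ → E}
    (hf : Summable f) (N : ℕ) : Summable fun n => if N ≤ n then f n else 0 := by
  convert hf.indicator {n | N ≤ n} using 2 with n
  simp [Set.indicator_apply]

theorem tendsto_sum_Ico_tsum_ite {E : Type*} [AddCommMonoid E] [TopologicalSpace E] {f : ℕ → E}
    (N : ℕ) (hf : Summable fun n => if N ≤ n then f n else 0) :
    Tendsto (fun M => ∑ n ∈ Ico N M, f n) atTop (𝓝 (∑' n, if N ≤ n then f n else 0)) := by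
  refine hf.hasSum.tendsto_sum_nat.congr fun M => ?_
  rw [← sum_filter]
  congr 1
  ext n
  simp only [mem_filter, mem_range, mem_Ico]
  exact and_comm

theorem almost_orthogonality_general
    {S : Type*} [NormedAddCommGroup S] [InnerProductSpace ℂ S] [CompleteSpace S]
    (S' : ℕ → Submodule ℂ S)
    (C₂ : ℝ) (hC₂ : 0 < C₂)
    (hb : ∀ n m : ℕ, 1 ≤ n → 1 ≤ m → ∀ Un ∈ S' n, ∀ Um ∈ S' (n + m),
      ‖(inner ℂ Un Um : ℂ)‖ ≤ C₂ * ‖Un‖ * ‖Um‖ / ((n : ℝ) * m)) :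
    ∃ C₂' > 0, ∀ U : ℕ → S, (∀ n, U n ∈ S' n) → U 0 = 0 →
      Summable (fun n => ‖U n‖ ^ 2) →
      Summable U
      ∧ ∀ N : ℕ, 1 ≤ N →
        |‖∑' n, (if N ≤ n then U n else 0)‖ ^ 2
            - ∑' n, (if N ≤ n then ‖U n‖ ^ 2 else 0)|
          ≤ C₂' * Real.sqrt (∑' n, (if N ≤ n then (1 : ℝ) / (n : ℝ) ^ 2 else 0))
              * ∑' n, (if N ≤ n then ‖U n‖ ^ 2 else 0) := by
  refine ⟨2 * C₂ * √(π ^ 2 / 6), by positivity, fun U hU hU0 hsum => ?_⟩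
  have hinner : ∀ j k : ℕ, j < k →
      ‖inner ℂ (U j) (U k)‖ ≤ C₂ * ‖U j‖ * ‖U k‖ / (j * (k - j : ℕ)) := by
    intro j k hjk
    rcases Nat.eq_zero_or_pos j with rfl | hj
    · simp [hU0]
    · have hk : U k ∈ S' (j + (k - j)) := by rw [Nat.add_sub_cancel' hjk.le]; exact hU k
      exact hb j (k - j) hj (Nat.sub_pos_of_lt hjk) (U j) (hU j) (U k) hk
  have hfinite (s : Finset ℕ) := abs_norm_sq_sum_sub_sum_norm_sq_le_of_inner_le s U hC₂.le
    fun j _ k _ => hinner j k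
  have hU_summable : Summable U := summable_of_norm_sq_sum_le _
    (fun s => norm_sq_sum_le_of_inner_le s U hC₂.le fun j _ k _ => hinner j k) hsum
  refine ⟨hU_summable, fun N _ => ?_⟩
  have hnorms := tendsto_sum_Ico_tsum_ite N (hsum.ite_le N)
  have hweights := tendsto_sum_Ico_tsum_ite N
    ((Real.summable_one_div_nat_pow.2 one_lt_two).ite_le N)
  have hvectors := tendsto_sum_Ico_tsum_ite N (hU_summable.ite_le N)
  exact le_of_tendsto_of_tendsto' ((hvectors.norm.pow 2).sub hnorms).abs
    ((tendsto_const_nhds.mul hweights.sqrt).mul hnorms) fun M => hfinite (Ico N M)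

/-- Almost-orthogonality estimate for the Riesz basis construction: if the
blocks `S'_n = span{Φ_{2n+1}, Φ_{2n+2}}` satisfy the uniform two-vector Riesz
estimate (a) and the almost-orthogonality bound (b), then for every square
summable block sequence `U_n ∈ S'_n` the series `Σ U_n` converges and the tail
sums are almost orthogonal. -/
theorem almost_orthogonality
    {S : Type*} [NormedAddCommGroup S] [InnerProductSpace ℂ S] [CompleteSpace S]
    (Φ : ℕ → S) (S' : ℕ → Submodule ℂ S)
    (hspan : ∀ n : ℕ, 1 ≤ n → S' n = Submodule.span ℂ {Φ (2 * n + 1), Φ (2 * n + 2)})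
    (C₁ : ℝ) (hC₁ : 1 ≤ C₁)
    (ha : ∀ n : ℕ, 1 ≤ n → ∀ u v : ℂ,
      C₁⁻¹ * (‖u‖ ^ 2 + ‖v‖ ^ 2) ≤ ‖u • Φ (2 * n + 1) + v • Φ (2 * n + 2)‖ ^ 2
      ∧ ‖u • Φ (2 * n + 1) + v • Φ (2 * n + 2)‖ ^ 2 ≤ C₁ * (‖u‖ ^ 2 + ‖v‖ ^ 2))
    (C₂ : ℝ) (hC₂ : 0 < C₂)
    (hb : ∀ n m : ℕ, 1 ≤ n → 1 ≤ m → ∀ Un ∈ S' n, ∀ Um ∈ S' (n + m),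
      ‖(inner ℂ Un Um : ℂ)‖ ≤ C₂ * ‖Un‖ * ‖Um‖ / ((n : ℝ) * m)) :
    ∃ C₂' > 0, ∀ U : ℕ → S, (∀ n, U n ∈ S' n) → U 0 = 0 →
      Summable (fun n => ‖U n‖ ^ 2) →
      Summable U
      ∧ ∀ N : ℕ, 1 ≤ N →
        |‖∑' n, (if N ≤ n then U n else 0)‖ ^ 2
            - ∑' n, (if N ≤ n then ‖U n‖ ^ 2 else 0)|
          ≤ C₂' * Real.sqrt (∑' n, (if N ≤ n then (1 : ℝ) / (n : ℝ) ^ 2 else 0))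
              * ∑' n, (if N ≤ n then ‖U n‖ ^ 2 else 0) :=
  almost_orthogonality_general S' C₂ hC₂ hb
end
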